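/- arXiv:1501.00924 — 10 statements merged into one kernel-verified Lean document; each statement's English description precedes it below -/
import Mathlib

section
/- Let β⁻ > 0, β⁺ > 0, 0 < h < 1, and d, e ∈ [0,1] with (d,e) ≠ (0,0). Then for every triple (c₁⁻, c₂⁻, c₃⁻) ∈ ℝ³ there exists a unique triple (c₁⁺, c₂⁺, c₃⁺) ∈ ℝ³ such that the jump conditions v⁻(D) = v⁺(D), v⁻(E) = v⁺(E), and β⁻(d c₂⁻ + e c₃⁻) = β⁺(d c₂⁺ + e c₃⁺) hold; that is, the piecewise linear function with these coefficients is a linear IFE function on K with interface parameters (d,e). -/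
/-! After dividing the flux condition by `β⁺ > 0`, the jump conditions are a 3 × 3 linear system
for `(c₁⁺, c₂⁺, c₃⁺)` whose determinant is `h (d² + e²)`, nonzero since `h > 0` and
`(d, e) ≠ (0, 0)`; Cramer's rule gives the solution. -/

theorem existsUnique_interface_system {h d e : ℝ} (hh : h ≠ 0) (hde : d ^ 2 + e ^ 2 ≠ 0)
    (A B F : ℝ) :
    ∃! c : ℝ × ℝ × ℝ,
      A = c.1 + c.2.2 * (d * h) ∧ B = c.1 + c.2.1 * (e * h) ∧ F = d * c.2.1 + e * c.2.2 := by
  refine ⟨((A * e ^ 2 + B * d ^ 2 - d * e * F * h) / (d ^ 2 + e ^ 2),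
      (B * e - A * e + d * F * h) / ((d ^ 2 + e ^ 2) * h),
      (A * d - B * d + e * F * h) / ((d ^ 2 + e ^ 2) * h)), ⟨?_, ?_, ?_⟩, ?_⟩
  · field_simp; ring
  · field_simp; ring
  · field_simp; ring
  rintro ⟨c₁, c₂, c₃⟩ ⟨hA, hB, hF⟩
  dsimp only at hA hB hF
  refine Prod.ext ?_ (Prod.ext ?_ ?_) <;> dsimp only
  · rw [eq_div_iff hde]
    linear_combination (-e ^ 2) * hA - d ^ 2 * hB + d * e * h * hF
  · rw [eq_div_iff (mul_ne_zero hde hh)]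
    linear_combination e * hA - e * hB - d * h * hF
  · rw [eq_div_iff (mul_ne_zero hde hh)]
    linear_combination (-d) * hA + d * hB - e * h * hF

theorem stmt0_general (βm βp h d e : ℝ) (hβp : 0 < βp)
    (h0 : 0 < h)
    (hde : (d, e) ≠ (0, 0))
    (c1m c2m c3m : ℝ) :
    ∃! c : ℝ × ℝ × ℝ,
      c1m + c3m * (d * h) = c.1 + c.2.2 * (d * h) ∧
      c1m + c2m * (e * h) = c.1 + c.2.1 * (e * h) ∧
      βm * (d * c2m + e * c3m) = βp * (d * c.2.1 + e * c.2.2) := by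
  have hde₂ : d ^ 2 + e ^ 2 ≠ 0 := by
    rwa [Ne, sq, sq, mul_self_add_mul_self_eq_zero, ← Prod.mk.injEq]
  have flux_iff (x : ℝ) :
      βm * (d * c2m + e * c3m) = βp * x ↔ βm * (d * c2m + e * c3m) / βp = x := by
    rw [div_eq_iff hβp.ne', mul_comm x]
  simpa only [flux_iff] using
    existsUnique_interface_system h0.ne' hde₂ _ _ (βm * (d * c2m + e * c3m) / βp)

/-- For the triangular interface element `K` with vertices `(0,0)`, `(h,0)`,
`(0,h)`, interface points `D = (0, d*h)`, `E = (e*h, 0)` with `(d,e) ≠ (0,0)`, every choice of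
coefficients `(c₁⁻, c₂⁻, c₃⁻)` of the `-` piece extends uniquely to coefficients
`(c₁⁺, c₂⁺, c₃⁺)` of the `+` piece satisfying the jump conditions
`v⁻(D) = v⁺(D)`, `v⁻(E) = v⁺(E)`, `β⁻(d c₂⁻ + e c₃⁻) = β⁺(d c₂⁺ + e c₃⁺)`. -/
theorem stmt0 (βm βp h d e : ℝ) (hβm : 0 < βm) (hβp : 0 < βp)
    (h0 : 0 < h) (h1 : h < 1)
    (hd : d ∈ Set.Icc (0:ℝ) 1) (he : e ∈ Set.Icc (0:ℝ) 1)
    (hde : (d, e) ≠ (0, 0))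
    (c1m c2m c3m : ℝ) :
    ∃! c : ℝ × ℝ × ℝ,
      c1m + c3m * (d * h) = c.1 + c.2.2 * (d * h) ∧
      c1m + c2m * (e * h) = c.1 + c.2.1 * (e * h) ∧
      βm * (d * c2m + e * c3m) = βp * (d * c.2.1 + e * c.2.2) :=
  stmt0_general βm βp h d e hβp h0 hde c1m c2m c3m
end

section
/- There exists a constant C > 1 depending only on β⁻ and β⁺ (in particular independent of d, e and h) such that for all 0 < h < 1, all d, e ∈ [0,1] with (d,e) ≠ (0,0), and every linear IFE function v on K with interface parameters (d,e) and coefficients (c₁⁻, c₂⁻, c₃⁻) and (c₁⁺, c₂⁺, c₃⁺), one has (1/C)·∥(c₁⁺, c₂⁺, c₃⁺)∥ ≤ ∥(c₁⁻, c₂⁻, c₃⁻)∥ ≤ C·∥(c₁⁺, c₂⁺, c₃⁺)∥. -/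
/-!
The jumps of the coefficients are controlled by the interface conditions. The continuity of `v`
at `D` and `E` forces the tangential derivative `d c₃ - e c₂` to be continuous across `DE`,
while the flux condition scales the normal derivative `d c₂ + e c₃` by `β⁺/β⁻`; hence
the gradients of `v⁻` and `v⁺` are comparable. Continuity at `D` then writes `c₁⁻` as `c₁⁺` plus
a gradient term multiplied by `dh ∈ [0, 1]`. The bound is symmetric in `±`, which gives both
inequalities with a constant depending only on `β⁺/β⁻` and `β⁻/β⁺`.
-/

lemma sq_add_sq_le_of_normal_eq_mul {d e a b a' b' μ : ℝ} (hde : (d, e) ≠ (0, 0))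
    (hnormal : d * a + e * b = μ * (d * a' + e * b'))
    (htangent : d * b - e * a = d * b' - e * a') :
    a ^ 2 + b ^ 2 ≤ (μ ^ 2 + 1) * (a' ^ 2 + b' ^ 2) := by
  have hnorm : 0 < d ^ 2 + e ^ 2 := by
    by_contra! hle
    exact hde (Prod.ext (by nlinarith [sq_nonneg d, sq_nonneg e])
      (by nlinarith [sq_nonneg d, sq_nonneg e]))
  have pythagoras : ∀ x y : ℝ,
      (d ^ 2 + e ^ 2) * (x ^ 2 + y ^ 2) = (d * x + e * y) ^ 2 + (d * y - e * x) ^ 2 :=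
    fun x y => by ring
  refine le_of_mul_le_mul_left ?_ hnorm
  rw [mul_left_comm, pythagoras, pythagoras, hnormal, htangent]
  nlinarith [sq_nonneg (d * a' + e * b'), mul_nonneg (sq_nonneg μ) (sq_nonneg (d * b' - e * a'))]

lemma sq_le_of_eq_add_mul {x y z t : ℝ} (hx : x = y + z * t) (ht : |t| ≤ 1) :
    x ^ 2 ≤ 2 * y ^ 2 + 2 * z ^ 2 := by
  have hzt : (z * t) ^ 2 ≤ z ^ 2 := by
    rw [mul_pow]
    exact mul_le_of_le_one_right (sq_nonneg z) (sq_le_one_iff_abs_le_one t |>.mpr ht)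
  calc x ^ 2 ≤ 2 * (y ^ 2 + (z * t) ^ 2) := hx ▸ add_sq_le
    _ ≤ 2 * y ^ 2 + 2 * z ^ 2 := by linarith

lemma ife_coeff_sq_le {βm βp h d e c1m c2m c3m c1p c2p c3p : ℝ} (hβm : βm ≠ 0)
    (hh : h ≠ 0) (hdh : |d * h| ≤ 1) (hde : (d, e) ≠ (0, 0))
    (hD : c1m + c3m * (d * h) = c1p + c3p * (d * h))
    (hE : c1m + c2m * (e * h) = c1p + c2p * (e * h))
    (hflux : βm * (d * c2m + e * c3m) = βp * (d * c2p + e * c3p)) :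
    c1m ^ 2 + c2m ^ 2 + c3m ^ 2 ≤ (9 + 5 * (βp / βm) ^ 2) * (c1p ^ 2 + c2p ^ 2 + c3p ^ 2) := by
  set μ := βp / βm
  have htangent : d * c3m - e * c2m = d * c3p - e * c2p :=
    mul_left_cancel₀ hh (by linear_combination hD - hE)
  have hnormal : d * c2m + e * c3m = μ * (d * c2p + e * c3p) := by
    rw [div_mul_eq_mul_div, eq_div_iff hβm]
    linear_combination hflux
  have hgrad := sq_add_sq_le_of_normal_eq_mul hde hnormal htangent
  have hc1 : c1m ^ 2 ≤ 2 * c1p ^ 2 + 2 * (c3p - c3m) ^ 2 :=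
    sq_le_of_eq_add_mul (by linear_combination hD) hdh
  have hc3 : (c3p - c3m) ^ 2 ≤ 2 * (c3p ^ 2 + c3m ^ 2) := by
    nlinarith [sq_nonneg (c3p + c3m)]
  nlinarith [mul_nonneg (sq_nonneg μ) (sq_nonneg c1p), sq_nonneg c2p]

lemma sqrt_le_mul_sqrt_of_le_sq_mul {x y C : ℝ} (hC : 0 ≤ C) (hxy : x ≤ C ^ 2 * y) :
    Real.sqrt x ≤ C * Real.sqrt y := by
  calc Real.sqrt x ≤ Real.sqrt (C ^ 2 * y) := Real.sqrt_le_sqrt hxy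
    _ = C * Real.sqrt y := by rw [Real.sqrt_mul (sq_nonneg C), Real.sqrt_sq hC]

/-- coefficient comparison for linear IFE functions on the triangle `K` with
vertices `(0,0)`, `(h,0)`, `(0,h)` and interface points `D = (0,d*h)`, `E = (e*h,0)`:
there is a constant `C > 1` depending only on `β⁻, β⁺` such that
`(1/C)‖(c₁⁺,c₂⁺,c₃⁺)‖ ≤ ‖(c₁⁻,c₂⁻,c₃⁻)‖ ≤ C‖(c₁⁺,c₂⁺,c₃⁺)‖` for all coefficients
satisfying the jump conditions. -/
theorem stmt1 (βm βp : ℝ) (hβm : 0 < βm) (hβp : 0 < βp) :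
    ∃ C : ℝ, 1 < C ∧
      ∀ h d e c1m c2m c3m c1p c2p c3p : ℝ,
        0 < h → h < 1 →
        d ∈ Set.Icc (0:ℝ) 1 → e ∈ Set.Icc (0:ℝ) 1 → (d, e) ≠ (0, 0) →
        (c1m + c3m * (d * h) = c1p + c3p * (d * h)) →
        (c1m + c2m * (e * h) = c1p + c2p * (e * h)) →
        (βm * (d * c2m + e * c3m) = βp * (d * c2p + e * c3p)) →
        (1 / C) * Real.sqrt (c1p ^ 2 + c2p ^ 2 + c3p ^ 2)
            ≤ Real.sqrt (c1m ^ 2 + c2m ^ 2 + c3m ^ 2) ∧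
        Real.sqrt (c1m ^ 2 + c2m ^ 2 + c3m ^ 2)
            ≤ C * Real.sqrt (c1p ^ 2 + c2p ^ 2 + c3p ^ 2) := by
  set μ := βp / βm
  set ν := βm / βp
  have hμ : 0 < μ := div_pos hβp hβm
  have hν : 0 < ν := div_pos hβm hβp
  have hC_sq : 9 + 5 * μ ^ 2 ≤ (3 * (1 + μ + ν)) ^ 2 ∧ 9 + 5 * ν ^ 2 ≤ (3 * (1 + μ + ν)) ^ 2 :=
    ⟨by nlinarith, by nlinarith⟩
  refine ⟨3 * (1 + μ + ν), by linarith, ?_⟩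
  intro h d e c1m c2m c3m c1p c2p c3p hh0 hh1 ⟨hd0, hd1⟩ _ hde hD hE hflux
  have hC : 0 < 3 * (1 + μ + ν) := by positivity
  have hdh : |d * h| ≤ 1 := by
    rw [abs_of_nonneg (by positivity)]
    nlinarith
  have hm := ife_coeff_sq_le hβm.ne' hh0.ne' hdh hde hD hE hflux
  have hp := ife_coeff_sq_le hβp.ne' hh0.ne' hdh hde hD.symm hE.symm hflux.symm
  constructor
  · rw [one_div_mul_eq_div, div_le_iff₀' hC]
    exact sqrt_le_mul_sqrt_of_le_sq_mul hC.le
      (hp.trans (mul_le_mul_of_nonneg_right hC_sq.2 (by positivity)))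
  · exact sqrt_le_mul_sqrt_of_le_sq_mul hC.le
      (hm.trans (mul_le_mul_of_nonneg_right hC_sq.1 (by positivity)))
end

section
/- There exists a constant C > 1 depending only on β⁻ and β⁺ (in particular independent of d, e and h) such that for all 0 < h < 1, all d, e ∈ [0,1] with (d,e) ≠ (0,0), and every linear IFE function v on K with interface parameters (d,e), one has (1/C)·∥(c₂⁺, c₃⁺)∥ ≤ ∥(c₂⁻, c₃⁻)∥ ≤ C·∥(c₂⁺, c₃⁺)∥. Moreover, the gradient coefficients (c₂⁺, c₃⁺) are determined by (c₂⁻, c₃⁻) alone: if two linear IFE functions with the same interface parameters have the same (c₂⁻, c₃⁻) but possibly different c₁⁻, then they have the same (c₂⁺, c₃⁺). -/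
/-! With `n = (d, e)` normal and `t = (e, -d)` tangent to the interface `DE`, subtracting the two
continuity conditions gives `h · t·∇v⁻ = h · t·∇v⁺`, while the flux condition gives
`β⁻ n·∇v⁻ = β⁺ n·∇v⁺`. Thus in the orthogonal frame `{t, n}` the map `∇v⁺ ↦ ∇v⁻` is diagonal with
entries `1` and `β⁺/β⁻`, so it is invertible and both it and its inverse are bounded by
`C = 1 + β⁻/β⁺ + β⁺/β⁻`, uniformly in `d`, `e` and `h`. -/

lemma sq_add_sq_pos_of_ne {d e : ℝ} (hde : (d, e) ≠ (0, 0)) : 0 < d ^ 2 + e ^ 2 := by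
  by_contra! hle
  have hd : d = 0 := by nlinarith [sq_nonneg d, sq_nonneg e]
  have he : e = 0 := by nlinarith [sq_nonneg d, sq_nonneg e]
  exact hde (by rw [hd, he])

lemma tangential_eq_of_continuous_at_interface {h d e c1m c2m c3m c1p c2p c3p : ℝ} (hh : h ≠ 0)
    (hD : c1m + c3m * (d * h) = c1p + c3p * (d * h))
    (hE : c1m + c2m * (e * h) = c1p + c2p * (e * h)) :
    e * c2m - d * c3m = e * c2p - d * c3p := by
  apply mul_right_cancel₀ hh
  linear_combination hE - hD

lemma eq_of_tangential_eq_of_normal_eq {d e a b a' b' : ℝ} (hde : 0 < d ^ 2 + e ^ 2)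
    (hT : e * a - d * b = e * a' - d * b') (hN : d * a + e * b = d * a' + e * b') :
    a = a' ∧ b = b' := by
  constructor <;> apply mul_left_cancel₀ hde.ne'
  · linear_combination e * hT + d * hN
  · linear_combination e * hN - d * hT

lemma sq_add_sq_le_of_tangential_eq_of_flux_eq {βm βp C d e am bm ap bp : ℝ} (hβm : 0 < βm)
    (hβp : 0 ≤ βp) (hC : 1 ≤ C) (hβC : βp ≤ C * βm) (hde : 0 < d ^ 2 + e ^ 2)
    (hT : e * am - d * bm = e * ap - d * bp)
    (hN : βm * (d * am + e * bm) = βp * (d * ap + e * bp)) :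
    am ^ 2 + bm ^ 2 ≤ C ^ 2 * (ap ^ 2 + bp ^ 2) := by
  have hnormal : (d * am + e * bm) ^ 2 ≤ C ^ 2 * (d * ap + e * bp) ^ 2 := by
    have hβ : βp ^ 2 ≤ (C * βm) ^ 2 := pow_le_pow_left₀ hβp hβC 2
    refine le_of_mul_le_mul_left ?_ (pow_pos hβm 2)
    calc βm ^ 2 * (d * am + e * bm) ^ 2 = βp ^ 2 * (d * ap + e * bp) ^ 2 := by
          rw [← mul_pow, hN, mul_pow]
      _ ≤ (C * βm) ^ 2 * (d * ap + e * bp) ^ 2 := by gcongr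
      _ = βm ^ 2 * (C ^ 2 * (d * ap + e * bp) ^ 2) := by ring
  have htangential : (e * am - d * bm) ^ 2 ≤ C ^ 2 * (e * ap - d * bp) ^ 2 := by
    rw [hT]
    exact le_mul_of_one_le_left (sq_nonneg _) (one_le_pow₀ hC)
  refine le_of_mul_le_mul_left ?_ hde
  calc (d ^ 2 + e ^ 2) * (am ^ 2 + bm ^ 2) = (e * am - d * bm) ^ 2 + (d * am + e * bm) ^ 2 := by
        ring
    _ ≤ C ^ 2 * (e * ap - d * bp) ^ 2 + C ^ 2 * (d * ap + e * bp) ^ 2 :=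
        add_le_add htangential hnormal
    _ = (d ^ 2 + e ^ 2) * (C ^ 2 * (ap ^ 2 + bp ^ 2)) := by ring

lemma sqrt_sq_add_sq_le_of_tangential_eq_of_flux_eq {βm βp C d e am bm ap bp : ℝ}
    (hβm : 0 < βm) (hβp : 0 ≤ βp) (hC : 1 ≤ C) (hβC : βp ≤ C * βm) (hde : 0 < d ^ 2 + e ^ 2)
    (hT : e * am - d * bm = e * ap - d * bp)
    (hN : βm * (d * am + e * bm) = βp * (d * ap + e * bp)) :
    Real.sqrt (am ^ 2 + bm ^ 2) ≤ C * Real.sqrt (ap ^ 2 + bp ^ 2) := by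
  calc Real.sqrt (am ^ 2 + bm ^ 2) ≤ Real.sqrt (C ^ 2 * (ap ^ 2 + bp ^ 2)) :=
        Real.sqrt_le_sqrt (sq_add_sq_le_of_tangential_eq_of_flux_eq hβm hβp hC hβC hde hT hN)
    _ = C * Real.sqrt (ap ^ 2 + bp ^ 2) := by
        rw [Real.sqrt_mul (sq_nonneg C), Real.sqrt_sq (by linarith)]

lemma exists_one_lt_le_mul_and_le_mul {a b : ℝ} (ha : 0 < a) (hb : 0 < b) :
    ∃ C : ℝ, 1 < C ∧ b ≤ C * a ∧ a ≤ C * b := by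
  refine ⟨1 + a / b + b / a, by linarith [div_pos ha hb, div_pos hb ha], ?_, ?_⟩
  · have : (1 + a / b + b / a) * a = a + a ^ 2 / b + b := by field_simp
    have : 0 < a ^ 2 / b := by positivity
    linarith
  · have : (1 + a / b + b / a) * b = b + a + b ^ 2 / a := by field_simp
    have : 0 < b ^ 2 / a := by positivity
    linarith

/-- gradient-coefficient comparison for linear IFE functions on the triangle `K`
with vertices `(0,0)`, `(h,0)`, `(0,h)` and interface points `D = (0,d*h)`, `E = (e*h,0)`:
there is `C > 1` depending only on `β⁻, β⁺` with
`(1/C)‖(c₂⁺,c₃⁺)‖ ≤ ‖(c₂⁻,c₃⁻)‖ ≤ C‖(c₂⁺,c₃⁺)‖`; moreover `(c₂⁺,c₃⁺)` is determined by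
`(c₂⁻,c₃⁻)` alone (independently of `c₁⁻`). -/
theorem stmt2 (βm βp : ℝ) (hβm : 0 < βm) (hβp : 0 < βp) :
    ∃ C : ℝ, 1 < C ∧
      (∀ h d e c1m c2m c3m c1p c2p c3p : ℝ,
        0 < h → h < 1 →
        d ∈ Set.Icc (0:ℝ) 1 → e ∈ Set.Icc (0:ℝ) 1 → (d, e) ≠ (0, 0) →
        (c1m + c3m * (d * h) = c1p + c3p * (d * h)) →
        (c1m + c2m * (e * h) = c1p + c2p * (e * h)) →
        (βm * (d * c2m + e * c3m) = βp * (d * c2p + e * c3p)) →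
        (1 / C) * Real.sqrt (c2p ^ 2 + c3p ^ 2) ≤ Real.sqrt (c2m ^ 2 + c3m ^ 2) ∧
        Real.sqrt (c2m ^ 2 + c3m ^ 2) ≤ C * Real.sqrt (c2p ^ 2 + c3p ^ 2)) ∧
      (∀ h d e c2m c3m c1m c1p c2p c3p c1m' c1p' c2p' c3p' : ℝ,
        0 < h → h < 1 →
        d ∈ Set.Icc (0:ℝ) 1 → e ∈ Set.Icc (0:ℝ) 1 → (d, e) ≠ (0, 0) →
        (c1m + c3m * (d * h) = c1p + c3p * (d * h)) →
        (c1m + c2m * (e * h) = c1p + c2p * (e * h)) →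
        (βm * (d * c2m + e * c3m) = βp * (d * c2p + e * c3p)) →
        (c1m' + c3m * (d * h) = c1p' + c3p' * (d * h)) →
        (c1m' + c2m * (e * h) = c1p' + c2p' * (e * h)) →
        (βm * (d * c2m + e * c3m) = βp * (d * c2p' + e * c3p')) →
        c2p = c2p' ∧ c3p = c3p') := by
  obtain ⟨C, hC, hCp, hCm⟩ := exists_one_lt_le_mul_and_le_mul hβm hβp
  refine ⟨C, hC, ?_, ?_⟩
  · intro h d e c1m c2m c3m c1p c2p c3p hh _ _ _ hde hD hE hflux
    have hT := tangential_eq_of_continuous_at_interface hh.ne' hD hE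
    have hde := sq_add_sq_pos_of_ne hde
    constructor
    · rw [one_div_mul_eq_div, div_le_iff₀ (by linarith), mul_comm]
      exact sqrt_sq_add_sq_le_of_tangential_eq_of_flux_eq hβp hβm.le hC.le hCm hde hT.symm
        hflux.symm
    · exact sqrt_sq_add_sq_le_of_tangential_eq_of_flux_eq hβm hβp.le hC.le hCp hde hT hflux
  · intro h d e c2m c3m c1m c1p c2p c3p c1m' c1p' c2p' c3p' hh _ _ _ hde hD hE hflux hD' hE' hflux'
    exact eq_of_tangential_eq_of_normal_eq (sq_add_sq_pos_of_ne hde)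
      ((tangential_eq_of_continuous_at_interface hh.ne' hD hE).symm.trans
        (tangential_eq_of_continuous_at_interface hh.ne' hD' hE'))
      (mul_left_cancel₀ hβp.ne' (hflux.symm.trans hflux'))
end

section
/- There exists a constant C depending only on β⁻ and β⁺ (independent of d, e and h) such that for all 0 < h < 1, all d, e ∈ [0,1] with (d,e) ≠ (0,0), every linear IFE function v on K with interface parameters (d,e), every edge B of K, and each p ∈ {x, y}: ∥β v_p∥_{L²(B)} ≤ C h^{1/2} |K|^{-1/2} ∥√β ∇v∥_{L²(K)}. -/
/-!
Continuity of `v` at `D` and `E` makes the tangential derivative of `v` continuous across `DE`;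
together with the flux condition this makes `|∇v⁻|` and `|∇v⁺|` comparable, with ratio bounded
by `max β / min β`. Since `K⁻` and `K⁺` together cover a square of area `h² / 4`, the energy
therefore controls `h² (|∇v⁻|² + |∇v⁺|²)`, whereas the edge integral is at most
`2h max β² (|∇v⁻|² + |∇v⁺|²)` because every edge has length at most `2h`.
-/

open MeasureTheory

/-- The closed triangle `K` with vertices `(0,0)`, `(h,0)`, `(0,h)`. -/
def triK (h : ℝ) : Set (ℝ × ℝ) := {X | 0 ≤ X.1 ∧ 0 ≤ X.2 ∧ X.1 + X.2 ≤ h}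

/-- The subelement `K⁻ = {(x,y) ∈ K : d x + e y ≤ d e h}`. -/
def triKm (h d e : ℝ) : Set (ℝ × ℝ) := {X ∈ triK h | d * X.1 + e * X.2 ≤ d * e * h}

/-- The subelement `K⁺ = {(x,y) ∈ K : d x + e y ≥ d e h}`. -/
def triKp (h d e : ℝ) : Set (ℝ × ℝ) := {X ∈ triK h | d * e * h ≤ d * X.1 + e * X.2}

/-- `∥√β ∇v∥²_{L²(K)} = β⁻∫_{K⁻}|∇v⁻|² + β⁺∫_{K⁺}|∇v⁺|²` for the piecewise linear
function with gradients `(c₂⁻,c₃⁻)` on `K⁻` and `(c₂⁺,c₃⁺)` on `K⁺`. -/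
noncomputable def energySqLin (βm βp h d e c2m c3m c2p c3p : ℝ) : ℝ :=
  βm * (∫ _X in triKm h d e, (c2m ^ 2 + c3m ^ 2)) +
    βp * (∫ _X in triKp h d e, (c2p ^ 2 + c3p ^ 2))

/-- `∥β v_p∥²_{L²(B)} = ∫_{B∩K⁻}(β⁻ ∂ₚv⁻)² ds + ∫_{B∩K⁺}(β⁺ ∂ₚv⁺)² ds`, where the segment
`B` from `P` to `Q` is parametrized by `t ↦ P + t(Q-P)`, `t ∈ [0,1]`, and `ds` is the
arclength measure (`amv`, `apv` are the two constant values of `∂ₚ v`). -/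
noncomputable def edgeSqLin (βm βp h d e amv apv : ℝ) (P Q : ℝ × ℝ) : ℝ :=
  Real.sqrt ((Q.1 - P.1) ^ 2 + (Q.2 - P.2) ^ 2) *
    ((∫ _t in {t : ℝ | t ∈ Set.Icc (0:ℝ) 1 ∧ P + t • (Q - P) ∈ triKm h d e}, (βm * amv) ^ 2) +
     (∫ _t in {t : ℝ | t ∈ Set.Icc (0:ℝ) 1 ∧ P + t • (Q - P) ∈ triKp h d e}, (βp * apv) ^ 2))


section InterfaceJump

variable {β β' M d e a₁ a₂ b₁ b₂ : ℝ}

/-- `(d, e)` is normal to the interface: `hflux` is the flux jump condition between the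
gradients `a` and `b`, and `htan` the continuity of their tangential components. -/
theorem sq_mul_sq_add_sq_le_of_flux_eq (hde : 0 < d ^ 2 + e ^ 2) (hβ : β ^ 2 ≤ M)
    (hβ' : β' ^ 2 ≤ M) (hflux : β * (d * a₁ + e * a₂) = β' * (d * b₁ + e * b₂))
    (htan : d * a₂ - e * a₁ = d * b₂ - e * b₁) :
    β ^ 2 * (a₁ ^ 2 + a₂ ^ 2) ≤ M * (b₁ ^ 2 + b₂ ^ 2) := by
  refine le_of_mul_le_mul_left ?_ hde
  calc (d ^ 2 + e ^ 2) * (β ^ 2 * (a₁ ^ 2 + a₂ ^ 2))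
      = (β' * (d * b₁ + e * b₂)) ^ 2 + β ^ 2 * (d * b₂ - e * b₁) ^ 2 := by
        rw [← hflux, ← htan]; ring
    _ ≤ M * (d * b₁ + e * b₂) ^ 2 + M * (d * b₂ - e * b₁) ^ 2 := by
        rw [mul_pow]
        gcongr
    _ = (d ^ 2 + e ^ 2) * (M * (b₁ ^ 2 + b₂ ^ 2)) := by ring

end InterfaceJump

theorem tangential_eq_of_jump {h d e c1m c2m c3m c1p c2p c3p : ℝ} (hh : h ≠ 0)
    (hD : c1m + c3m * (d * h) = c1p + c3p * (d * h))
    (hE : c1m + c2m * (e * h) = c1p + c2p * (e * h)) :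
    d * c3m - e * c2m = d * c3p - e * c2p := by
  have : (d * c3m - e * c2m - (d * c3p - e * c2p)) * h = 0 := by linear_combination hD - hE
  linarith [(mul_eq_zero.1 this).resolve_right hh]

theorem volume_real_Icc_zero (a b : ℝ) (ha : 0 ≤ a) (hb : 0 ≤ b) :
    volume.real (Set.Icc ((0 : ℝ), (0 : ℝ)) (a, b)) = a * b := by
  rw [Measure.real, Set.Icc_prod_eq, Measure.volume_eq_prod, Measure.prod_prod,
    Real.volume_Icc, Real.volume_Icc, ← ENNReal.ofReal_mul (by simpa using ha)]
  simp [ha, hb]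

theorem triK_subset_Icc (h : ℝ) : triK h ⊆ Set.Icc ((0 : ℝ), (0 : ℝ)) (h, h) :=
  fun _ ⟨hx, hy, hxy⟩ => ⟨⟨hx, hy⟩, by constructor <;> dsimp <;> linarith⟩

theorem measureReal_triKm_add_triKp_ge (h d e : ℝ) (hh : 0 ≤ h) :
    h ^ 2 / 4 ≤ volume.real (triKm h d e) + volume.real (triKp h d e) := by
  have hsquare : Set.Icc ((0 : ℝ), (0 : ℝ)) (h / 2, h / 2) ⊆ triKm h d e ∪ triKp h d e := by
    rintro X ⟨⟨hx, hy⟩, hx', hy'⟩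
    have hX : X ∈ triK h := ⟨hx, hy, by dsimp at hx' hy'; linarith⟩
    rcases le_total (d * X.1 + e * X.2) (d * e * h) with hle | hle
    exacts [Or.inl ⟨hX, hle⟩, Or.inr ⟨hX, hle⟩]
  have hfin : volume (triKm h d e ∪ triKp h d e) ≠ ⊤ :=
    ((isCompact_Icc.isBounded.subset ((Set.union_subset (fun _ hX => hX.1) fun _ hX => hX.1).trans
      (triK_subset_Icc h))).measure_lt_top).ne
  calc h ^ 2 / 4 = volume.real (Set.Icc ((0 : ℝ), (0 : ℝ)) (h / 2, h / 2)) := by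
        rw [volume_real_Icc_zero _ _ (by positivity) (by positivity)]; ring
    _ ≤ volume.real (triKm h d e ∪ triKp h d e) := measureReal_mono hsquare hfin
    _ ≤ _ := measureReal_union_le _ _

theorem energySqLin_eq (βm βp h d e c2m c3m c2p c3p : ℝ) :
    energySqLin βm βp h d e c2m c3m c2p c3p =
      βm * (volume.real (triKm h d e) * (c2m ^ 2 + c3m ^ 2)) +
        βp * (volume.real (triKp h d e) * (c2p ^ 2 + c3p ^ 2)) := by
  simp only [energySqLin, setIntegral_const, smul_eq_mul]

theorem sq_add_le_energySqLin {βm βp h d e c2m c3m c2p c3p : ℝ} (hβm : 0 < βm)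
    (hβp : 0 < βp) (hh : 0 ≤ h)
    (hcm : βm ^ 2 * (c2m ^ 2 + c3m ^ 2) ≤ max βm βp ^ 2 * (c2p ^ 2 + c3p ^ 2))
    (hcp : βp ^ 2 * (c2p ^ 2 + c3p ^ 2) ≤ max βm βp ^ 2 * (c2m ^ 2 + c3m ^ 2)) :
    min βm βp ^ 3 * h ^ 2 * ((c2m ^ 2 + c3m ^ 2) + (c2p ^ 2 + c3p ^ 2)) ≤
      8 * max βm βp ^ 2 * energySqLin βm βp h d e c2m c3m c2p c3p := by
  set m := min βm βp
  set M := max βm βp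
  set gm := c2m ^ 2 + c3m ^ 2
  set gp := c2p ^ 2 + c3p ^ 2
  set Vm := volume.real (triKm h d e)
  set Vp := volume.real (triKp h d e)
  have hmM : m ≤ M := min_le_max
  have hVm : 0 ≤ Vm := measureReal_nonneg
  have hVp : 0 ≤ Vp := measureReal_nonneg
  have hcomp_m : m ^ 2 * (gm + gp) ≤ 2 * M ^ 2 * gm := by
    have : m ^ 2 * gp ≤ M ^ 2 * gm := le_trans (by gcongr; exact min_le_right _ _) hcp
    nlinarith [show m ^ 2 * gm ≤ M ^ 2 * gm by gcongr]
  have hcomp_p : m ^ 2 * (gm + gp) ≤ 2 * M ^ 2 * gp := by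
    have : m ^ 2 * gm ≤ M ^ 2 * gp := le_trans (by gcongr; exact min_le_left _ _) hcm
    nlinarith [show m ^ 2 * gp ≤ M ^ 2 * gp by gcongr]
  have hE : m * (Vm * gm + Vp * gp) ≤ energySqLin βm βp h d e c2m c3m c2p c3p := by
    rw [energySqLin_eq, mul_add]
    gcongr
    exacts [min_le_left _ _, min_le_right _ _]
  calc m ^ 3 * h ^ 2 * (gm + gp) = 4 * m * (h ^ 2 / 4 * (m ^ 2 * (gm + gp))) := by ring
    _ ≤ 4 * m * ((Vm + Vp) * (m ^ 2 * (gm + gp))) := by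
        gcongr
        exact measureReal_triKm_add_triKp_ge h d e hh
    _ = 4 * m * (Vm * (m ^ 2 * (gm + gp)) + Vp * (m ^ 2 * (gm + gp))) := by ring
    _ ≤ 4 * m * (Vm * (2 * M ^ 2 * gm) + Vp * (2 * M ^ 2 * gp)) := by gcongr
    _ = 8 * M ^ 2 * (m * (Vm * gm + Vp * gp)) := by ring
    _ ≤ 8 * M ^ 2 * energySqLin βm βp h d e c2m c3m c2p c3p := by gcongr

theorem edgeSqLin_le (βm βp h d e am ap : ℝ) (P Q : ℝ × ℝ) :
    edgeSqLin βm βp h d e am ap P Q ≤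
      √((Q.1 - P.1) ^ 2 + (Q.2 - P.2) ^ 2) * ((βm * am) ^ 2 + (βp * ap) ^ 2) := by
  have hunit : ∀ S : Set ℝ, S ⊆ Set.Icc 0 1 → volume.real S ≤ 1 := fun S hS =>
    (measureReal_mono hS measure_Icc_lt_top.ne).trans_eq (by simp)
  simp only [edgeSqLin, setIntegral_const, smul_eq_mul]
  gcongr
  · exact mul_le_of_le_one_left (sq_nonneg _) (hunit _ fun _ ht => ht.1)
  · exact mul_le_of_le_one_left (sq_nonneg _) (hunit _ fun _ ht => ht.1)

theorem edge_length_le {h : ℝ} (hh : 0 ≤ h) {P Q : ℝ × ℝ}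
    (hPQ : (P = ((0:ℝ), (0:ℝ)) ∧ Q = (h, 0)) ∨ (P = ((0:ℝ), (0:ℝ)) ∧ Q = (0, h)) ∨
      (P = ((h:ℝ), (0:ℝ)) ∧ Q = (0, h))) :
    √((Q.1 - P.1) ^ 2 + (Q.2 - P.2) ^ 2) ≤ 2 * h := by
  refine Real.sqrt_le_iff.2 ⟨by positivity, ?_⟩
  rcases hPQ with ⟨rfl, rfl⟩ | ⟨rfl, rfl⟩ | ⟨rfl, rfl⟩ <;> dsimp <;> nlinarith

theorem sqrt_le_mul_sqrt_mul_inv_sqrt_mul_sqrt {x C a b E : ℝ} (hC : 0 ≤ C) (ha : 0 ≤ a)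
    (hb : 0 ≤ b) (hx : x ≤ C ^ 2 * a / b * E) :
    √x ≤ C * √a * (√b)⁻¹ * √E := by
  calc √x ≤ √(C ^ 2 * a / b * E) := Real.sqrt_le_sqrt hx
    _ = C * √a * (√b)⁻¹ * √E := by
      rw [Real.sqrt_mul (by positivity), Real.sqrt_div' _ hb, Real.sqrt_mul (sq_nonneg C),
        Real.sqrt_sq hC, div_eq_mul_inv]

noncomputable def traceConst (βm βp : ℝ) : ℝ := √(8 * max βm βp ^ 4 / min βm βp ^ 3)

theorem edgeSqLin_le_traceConst_sq_mul_energySqLin {βm βp h d e c2m c3m c2p c3p am ap L : ℝ}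
    (hβm : 0 < βm) (hβp : 0 < βp) (hh : 0 < h) (hL : L ≤ 2 * h)
    (hcm : βm ^ 2 * (c2m ^ 2 + c3m ^ 2) ≤ max βm βp ^ 2 * (c2p ^ 2 + c3p ^ 2))
    (hcp : βp ^ 2 * (c2p ^ 2 + c3p ^ 2) ≤ max βm βp ^ 2 * (c2m ^ 2 + c3m ^ 2))
    (ham : am ^ 2 ≤ c2m ^ 2 + c3m ^ 2) (hap : ap ^ 2 ≤ c2p ^ 2 + c3p ^ 2) :
    L * ((βm * am) ^ 2 + (βp * ap) ^ 2) ≤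
      traceConst βm βp ^ 2 * h / (h ^ 2 / 2) * energySqLin βm βp h d e c2m c3m c2p c3p := by
  set m := min βm βp
  set M := max βm βp
  set G := (c2m ^ 2 + c3m ^ 2) + (c2p ^ 2 + c3p ^ 2)
  have hedge : L * ((βm * am) ^ 2 + (βp * ap) ^ 2) ≤ 2 * h * (M ^ 2 * G) := by
    have hβm' : βm ^ 2 ≤ M ^ 2 := by gcongr; exact le_max_left _ _
    have hβp' : βp ^ 2 ≤ M ^ 2 := by gcongr; exact le_max_right _ _
    rw [mul_pow, mul_pow]
    gcongr
    · nlinarith [mul_le_mul hβm' ham (sq_nonneg _) (sq_nonneg _),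
        mul_le_mul hβp' hap (sq_nonneg _) (sq_nonneg _)]
  have henergy := sq_add_le_energySqLin (d := d) (e := e) hβm hβp hh.le hcm hcp
  rw [traceConst, Real.sq_sqrt (by positivity),
    show 8 * M ^ 4 / m ^ 3 * h / (h ^ 2 / 2) * energySqLin βm βp h d e c2m c3m c2p c3p =
      2 * M ^ 2 * (8 * M ^ 2 * energySqLin βm βp h d e c2m c3m c2p c3p) / (m ^ 3 * h) by
      field_simp,
    le_div_iff₀ (by positivity)]
  calc L * ((βm * am) ^ 2 + (βp * ap) ^ 2) * (m ^ 3 * h)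
        ≤ 2 * h * (M ^ 2 * G) * (m ^ 3 * h) := by gcongr
    _ = 2 * M ^ 2 * (m ^ 3 * h ^ 2 * G) := by ring
    _ ≤ _ := by gcongr

/-- trace inequality `∥β v_p∥_{L²(B)} ≤ C h^{1/2} |K|^{-1/2} ∥√β ∇v∥_{L²(K)}`
(`p = x, y`) for linear IFE functions on the triangle `K`, for every edge `B` of `K`, with
`C` depending only on `β⁻, β⁺`. -/
theorem stmt3 (βm βp : ℝ) (hβm : 0 < βm) (hβp : 0 < βp) :
    ∃ C : ℝ, 0 < C ∧
      ∀ h d e c1m c2m c3m c1p c2p c3p : ℝ,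
        0 < h → h < 1 →
        d ∈ Set.Icc (0:ℝ) 1 → e ∈ Set.Icc (0:ℝ) 1 → (d, e) ≠ (0, 0) →
        (c1m + c3m * (d * h) = c1p + c3p * (d * h)) →
        (c1m + c2m * (e * h) = c1p + c2p * (e * h)) →
        (βm * (d * c2m + e * c3m) = βp * (d * c2p + e * c3p)) →
        ∀ P Q : ℝ × ℝ,
          ((P = ((0:ℝ), (0:ℝ)) ∧ Q = (h, 0)) ∨
           (P = ((0:ℝ), (0:ℝ)) ∧ Q = (0, h)) ∨
           (P = ((h:ℝ), (0:ℝ)) ∧ Q = (0, h))) →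
          Real.sqrt (edgeSqLin βm βp h d e c2m c2p P Q)
              ≤ C * Real.sqrt h * (Real.sqrt (h ^ 2 / 2))⁻¹ *
                Real.sqrt (energySqLin βm βp h d e c2m c3m c2p c3p) ∧
          Real.sqrt (edgeSqLin βm βp h d e c3m c3p P Q)
              ≤ C * Real.sqrt h * (Real.sqrt (h ^ 2 / 2))⁻¹ *
                Real.sqrt (energySqLin βm βp h d e c2m c3m c2p c3p) := by
  refine ⟨traceConst βm βp, Real.sqrt_pos.2 (by positivity), ?_⟩
  intro h d e c1m c2m c3m c1p c2p c3p hh _ _ _ hde hjumpD hjumpE hflux P Q hPQ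
  have hn : 0 < d ^ 2 + e ^ 2 := by
    by_contra! hle
    exact hde (Prod.ext (by dsimp; nlinarith [sq_nonneg d, sq_nonneg e])
      (by dsimp; nlinarith [sq_nonneg d, sq_nonneg e]))
  have htan := tangential_eq_of_jump hh.ne' hjumpD hjumpE
  have hβm' : βm ^ 2 ≤ max βm βp ^ 2 := pow_le_pow_left₀ hβm.le (le_max_left _ _) 2
  have hβp' : βp ^ 2 ≤ max βm βp ^ 2 := pow_le_pow_left₀ hβp.le (le_max_right _ _) 2
  have hcm := sq_mul_sq_add_sq_le_of_flux_eq hn hβm' hβp' hflux htan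
  have hcp := sq_mul_sq_add_sq_le_of_flux_eq hn hβp' hβm' hflux.symm htan.symm
  have htrace : ∀ am ap, am ^ 2 ≤ c2m ^ 2 + c3m ^ 2 → ap ^ 2 ≤ c2p ^ 2 + c3p ^ 2 →
      √(edgeSqLin βm βp h d e am ap P Q) ≤ traceConst βm βp * √h * (√(h ^ 2 / 2))⁻¹ *
        √(energySqLin βm βp h d e c2m c3m c2p c3p) := fun am ap ham hap =>
    sqrt_le_mul_sqrt_mul_inv_sqrt_mul_sqrt (Real.sqrt_nonneg _) hh.le (by positivity)
      ((edgeSqLin_le ..).trans (edgeSqLin_le_traceConst_sq_mul_energySqLin hβm hβp hh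
        (edge_length_le hh.le hPQ) hcm hcp ham hap))
  exact ⟨htrace _ _ (le_add_of_nonneg_right (sq_nonneg _)) (le_add_of_nonneg_right (sq_nonneg _)),
    htrace _ _ (le_add_of_nonneg_left (sq_nonneg _)) (le_add_of_nonneg_left (sq_nonneg _))⟩
end

section
/- Bilinear IFE extension is well defined: let β⁻ > 0, β⁺ > 0, 0 < h < 1, and let the interface configuration on K = [0,h]² be of Type I (with d, e ∈ [0,1], (d,e) ≠ (0,0)) or of Type II (with d, e ∈ [0,1]). Then for every quadruple (c₁⁻, c₂⁻, c₃⁻, c₄) ∈ ℝ⁴ there exists a unique triple (c₁⁺, c₂⁺, c₃⁺) ∈ ℝ³ such that the piecewise bilinear function with pieces v⁻ = c₁⁻ + c₂⁻x + c₃⁻y + c₄xy and v⁺ = c₁⁺ + c₂⁺x + c₃⁺y + c₄xy satisfies the jump conditions v⁻(D) = v⁺(D), v⁻(E) = v⁺(E), and ∫_{DE} β⁻ ∇v⁻ · n̄ ds = ∫_{DE} β⁺ ∇v⁺ · n̄ ds. -/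
/-!
Along `DE` the gradient of a bilinear function is affine, so each flux integral is the length of
`DE` times the normal derivative at the midpoint, and the jump conditions become linear in the
differences `(a, b)` of the `x`- and `y`-coefficients of `v⁺` and `v⁻`. Continuity at `D` and `E`
forces `(a, b) ⊥ E - D`, and the flux condition prescribes `(a, b) · n̄`. In both configurations
`D ≠ E`, so `(a, b)` is the unique multiple of the unit normal `n̄` with that component, and
`c₁⁺` is then fixed by continuity at `D`.
-/

open MeasureTheory

/-- `n` is a unit normal to the segment from `D` to `E`. -/
def unitNormalTo (n D E : ℝ × ℝ) : Prop :=
  n.1 ^ 2 + n.2 ^ 2 = 1 ∧ n.1 * (E.1 - D.1) + n.2 * (E.2 - D.2) = 0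

/-- Jump conditions for bilinear IFE functions with pieces
`v⁻ = c₁⁻ + c₂⁻x + c₃⁻y + c₄xy`, `v⁺ = c₁⁺ + c₂⁺x + c₃⁺y + c₄xy`:
`v⁻(D) = v⁺(D)`, `v⁻(E) = v⁺(E)`, and `∫_{DE} β⁻∇v⁻·n̄ ds = ∫_{DE} β⁺∇v⁺·n̄ ds`,
the segment `DE` being parametrized by `t ↦ D + t(E-D)`, `t ∈ [0,1]`, with arclength
element `ds = ‖E-D‖ dt`. -/
noncomputable def bilJump (βm βp c1m c2m c3m c1p c2p c3p c4 : ℝ) (D E n : ℝ × ℝ) : Prop :=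
  c1m + c2m * D.1 + c3m * D.2 + c4 * D.1 * D.2
      = c1p + c2p * D.1 + c3p * D.2 + c4 * D.1 * D.2 ∧
  c1m + c2m * E.1 + c3m * E.2 + c4 * E.1 * E.2
      = c1p + c2p * E.1 + c3p * E.2 + c4 * E.1 * E.2 ∧
  Real.sqrt ((E.1 - D.1) ^ 2 + (E.2 - D.2) ^ 2) *
      (∫ t in (0:ℝ)..1, βm * ((c2m + c4 * (D.2 + t * (E.2 - D.2))) * n.1 +
        (c3m + c4 * (D.1 + t * (E.1 - D.1))) * n.2))
    = Real.sqrt ((E.1 - D.1) ^ 2 + (E.2 - D.2) ^ 2) *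
      (∫ t in (0:ℝ)..1, βp * ((c2p + c4 * (D.2 + t * (E.2 - D.2))) * n.1 +
        (c3p + c4 * (D.1 + t * (E.1 - D.1))) * n.2))

/-- `∇v · n` at the midpoint of `DE`, for `v = c₁ + c₂x + c₃y + c₄xy`. -/
noncomputable def midNormalDeriv (c2 c3 c4 : ℝ) (D E n : ℝ × ℝ) : ℝ :=
  (c2 + c4 * ((D.2 + E.2) / 2)) * n.1 + (c3 + c4 * ((D.1 + E.1) / 2)) * n.2

theorem intervalIntegral_affine_zero_one (P Q : ℝ) :
    ∫ t in (0:ℝ)..1, (P + Q * t) = P + Q / 2 := by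
  rw [intervalIntegral.integral_add intervalIntegrable_const
      (intervalIntegral.intervalIntegrable_id.const_mul Q), intervalIntegral.integral_const_mul]
  simp
  ring

theorem integral_normalDeriv_segment (b c2 c3 c4 : ℝ) (D E n : ℝ × ℝ) :
    ∫ t in (0:ℝ)..1, b * ((c2 + c4 * (D.2 + t * (E.2 - D.2))) * n.1 +
        (c3 + c4 * (D.1 + t * (E.1 - D.1))) * n.2)
      = b * midNormalDeriv c2 c3 c4 D E n := by
  have hfun : (fun t : ℝ => b * ((c2 + c4 * (D.2 + t * (E.2 - D.2))) * n.1 +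
        (c3 + c4 * (D.1 + t * (E.1 - D.1))) * n.2))
      = fun t => b * ((c2 + c4 * D.2) * n.1 + (c3 + c4 * D.1) * n.2)
          + b * c4 * ((E.2 - D.2) * n.1 + (E.1 - D.1) * n.2) * t := by
    funext t; ring
  rw [hfun, intervalIntegral_affine_zero_one, midNormalDeriv]
  ring

theorem eq_smul_unitNormal_iff {n₁ n₂ w₁ w₂ a b s : ℝ} (hn : n₁ ^ 2 + n₂ ^ 2 = 1)
    (hnw : n₁ * w₁ + n₂ * w₂ = 0) (hw : 0 < w₁ ^ 2 + w₂ ^ 2) :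
    a * w₁ + b * w₂ = 0 ∧ a * n₁ + b * n₂ = s ↔ a = s * n₁ ∧ b = s * n₂ := by
  constructor
  · rintro ⟨hw₀, hs⟩
    -- Lagrange's identity, with `‖n‖ = 1` and `n ⊥ w`.
    have hdet : (w₁ * n₂ - w₂ * n₁) ^ 2 = w₁ ^ 2 + w₂ ^ 2 := by
      linear_combination (w₁ ^ 2 + w₂ ^ 2) * hn - (n₁ * w₁ + n₂ * w₂) * hnw
    have hdet₀ : w₁ * n₂ - w₂ * n₁ ≠ 0 := fun h0 => by
      rw [h0] at hdet; linarith [hdet]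
    constructor
    · refine mul_right_cancel₀ hdet₀ ?_
      linear_combination n₂ * hw₀ - w₂ * hs + s * w₂ * hn - s * n₂ * hnw
    · refine mul_right_cancel₀ hdet₀ ?_
      linear_combination w₁ * hs - n₁ * hw₀ - s * w₁ * hn + s * n₁ * hnw
  · rintro ⟨rfl, rfl⟩
    exact ⟨by linear_combination s * hnw, by linear_combination s * hn⟩

theorem sub_sq_add_sub_sq_pos {D E : ℝ × ℝ} (hDE : D ≠ E) :
    0 < (E.1 - D.1) ^ 2 + (E.2 - D.2) ^ 2 := by
  by_contra! hle
  have h₁ : E.1 - D.1 = 0 := by nlinarith [sq_nonneg (E.1 - D.1), sq_nonneg (E.2 - D.2)]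
  have h₂ : E.2 - D.2 = 0 := by nlinarith [sq_nonneg (E.1 - D.1), sq_nonneg (E.2 - D.2)]
  exact hDE (Prod.ext (by linarith) (by linarith))

/-- The coefficients `(c₁⁺, c₂⁺, c₃⁺)`: `∇v⁺ - ∇v⁻` is the multiple of `n` that corrects the
flux jump, and `c₁⁺` makes `v⁺ - v⁻` vanish at `D`. -/
noncomputable def ifeExtension (βm βp c1m c2m c3m c4 : ℝ) (D E n : ℝ × ℝ) : ℝ × ℝ × ℝ :=
  let s := (βm - βp) / βp * midNormalDeriv c2m c3m c4 D E n
  (c1m - s * (n.1 * D.1 + n.2 * D.2), c2m + s * n.1, c3m + s * n.2)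

theorem bilJump_iff {βm βp : ℝ} (hβp : βp ≠ 0) {D E n : ℝ × ℝ} (hn : unitNormalTo n D E)
    (hDE : D ≠ E) (c1m c2m c3m c1p c2p c3p c4 : ℝ) :
    bilJump βm βp c1m c2m c3m c1p c2p c3p c4 D E n ↔
      (c1p, c2p, c3p) = ifeExtension βm βp c1m c2m c3m c4 D E n := by
  obtain ⟨hn, hnw⟩ := hn
  have hlen := sub_sq_add_sub_sq_pos hDE
  obtain ⟨s, hs_def⟩ : ∃ s, s = (βm - βp) / βp * midNormalDeriv c2m c3m c4 D E n := ⟨_, rfl⟩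
  have hs : βp * s = (βm - βp) * midNormalDeriv c2m c3m c4 D E n := by
    rw [hs_def]; field_simp
  have hmid : midNormalDeriv c2p c3p c4 D E n = midNormalDeriv c2m c3m c4 D E n
      + ((c2p - c2m) * n.1 + (c3p - c3m) * n.2) := by
    simp only [midNormalDeriv]; ring
  have hcoef := eq_smul_unitNormal_iff (a := c2p - c2m) (b := c3p - c3m) (s := s) hn hnw hlen
  rw [bilJump, integral_normalDeriv_segment, integral_normalDeriv_segment,
    mul_right_inj' (Real.sqrt_pos.mpr hlen).ne', hmid, ifeExtension]
  simp only [Prod.mk.injEq, ← hs_def]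
  constructor
  · rintro ⟨hD, hE, hflux⟩
    obtain ⟨h₂, h₃⟩ := hcoef.mp ⟨by linear_combination hD - hE,
      mul_left_cancel₀ hβp (by linear_combination -hflux - hs)⟩
    refine ⟨?_, by linear_combination h₂, by linear_combination h₃⟩
    linear_combination -hD - D.1 * h₂ - D.2 * h₃
  · rintro ⟨h₁, h₂, h₃⟩
    obtain ⟨hw₀, hs'⟩ := hcoef.mpr ⟨by linear_combination h₂, by linear_combination h₃⟩
    refine ⟨by linear_combination -h₁ - D.1 * h₂ - D.2 * h₃, ?_, ?_⟩
    · linear_combination -h₁ - hw₀ - D.1 * h₂ - D.2 * h₃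
    · linear_combination -βp * hs' - hs

theorem existsUnique_bilJump {βm βp : ℝ} (hβp : βp ≠ 0) {D E n : ℝ × ℝ}
    (hn : unitNormalTo n D E) (hDE : D ≠ E) (c1m c2m c3m c4 : ℝ) :
    ∃! c : ℝ × ℝ × ℝ, bilJump βm βp c1m c2m c3m c.1 c.2.1 c.2.2 c4 D E n :=
  (existsUnique_congr fun c : ℝ × ℝ × ℝ =>
    bilJump_iff hβp hn hDE c1m c2m c3m c.1 c.2.1 c.2.2 c4).mpr existsUnique_eq

theorem interfacePoints_ne {h d e : ℝ} (h0 : 0 < h) {D E : ℝ × ℝ}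
    (hconf : (D = ((0:ℝ), d * h) ∧ E = (e * h, (0:ℝ)) ∧ (d, e) ≠ (0, 0)) ∨
             (D = (d * h, h) ∧ E = (e * h, (0:ℝ)))) :
    D ≠ E := by
  rintro rfl
  rcases hconf with ⟨rfl, hE, hde⟩ | ⟨rfl, hE⟩
  · obtain ⟨he, hd⟩ := Prod.mk.inj hE
    exact hde (Prod.ext (by simpa [h0.ne'] using hd) (by simpa [h0.ne'] using he.symm))
  · exact h0.ne' (Prod.mk.inj hE).2

theorem stmt5_general (βm βp h d e : ℝ) (hβp : 0 < βp)
    (h0 : 0 < h)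
    (D E n : ℝ × ℝ) (hn : unitNormalTo n D E)
    (hconf : (D = ((0:ℝ), d * h) ∧ E = (e * h, (0:ℝ)) ∧ (d, e) ≠ (0, 0)) ∨
             (D = (d * h, h) ∧ E = (e * h, (0:ℝ))))
    (c1m c2m c3m c4 : ℝ) :
    ∃! c : ℝ × ℝ × ℝ, bilJump βm βp c1m c2m c3m c.1 c.2.1 c.2.2 c4 D E n :=
  existsUnique_bilJump hβp.ne' hn (interfacePoints_ne h0 hconf) c1m c2m c3m c4

/-- bilinear IFE extension is well defined on `K = [0,h]²`: for an interface
configuration of Type I (`D = (0,dh)`, `E = (eh,0)`, `(d,e) ≠ (0,0)`) or Type II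
(`D = (dh,h)`, `E = (eh,0)`), every quadruple `(c₁⁻,c₂⁻,c₃⁻,c₄)` admits a unique triple
`(c₁⁺,c₂⁺,c₃⁺)` satisfying the jump conditions. -/
theorem stmt5 (βm βp h d e : ℝ) (hβm : 0 < βm) (hβp : 0 < βp)
    (h0 : 0 < h) (h1 : h < 1)
    (hd : d ∈ Set.Icc (0:ℝ) 1) (he : e ∈ Set.Icc (0:ℝ) 1)
    (D E n : ℝ × ℝ) (hn : unitNormalTo n D E)
    (hconf : (D = ((0:ℝ), d * h) ∧ E = (e * h, (0:ℝ)) ∧ (d, e) ≠ (0, 0)) ∨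
             (D = (d * h, h) ∧ E = (e * h, (0:ℝ))))
    (c1m c2m c3m c4 : ℝ) :
    ∃! c : ℝ × ℝ × ℝ, bilJump βm βp c1m c2m c3m c.1 c.2.1 c.2.2 c4 D E n :=
  stmt5_general βm βp h d e hβp h0 D E n hn hconf c1m c2m c3m c4
end

section
/- There exists a constant C > 1 depending only on β⁻ and β⁺ (independent of d, e and h) such that for all 0 < h < 1, every interface configuration on K = [0,h]² of Type I (d, e ∈ [0,1], (d,e) ≠ (0,0)) or Type II (d, e ∈ [0,1]), and every bilinear IFE function v on K with coefficients (c₁⁻, c₂⁻, c₃⁻, c₄) and (c₁⁺, c₂⁺, c₃⁺, c₄), one has (1/C)·∥(c₁⁺, c₂⁺, c₃⁺, c₄)∥ ≤ ∥(c₁⁻, c₂⁻, c₃⁻, c₄)∥ ≤ C·∥(c₁⁺, c₂⁺, c₃⁺, c₄)∥. -/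
open MeasureTheory

/-!
Subtracting the two pieces cancels `c₄xy`, so `v⁻ - v⁺` is affine and vanishes at `D ≠ E`; its
gradient is therefore `s n̄` for a scalar `s`, and `c⁻ = c⁺ + s (-n̄·D, n̄₁, n̄₂, 0)`. The flux
integrand is affine along `DE`, so only its value at the midpoint `M` matters, and the flux
condition reads `β⁻ s = (β⁺ - β⁻) ⟪c⁺, (0, n̄₁, n̄₂, n̄₁M₂ + n̄₂M₁)⟫`. Both auxiliary vectors have
length at most `√3` since `D, E, M ∈ [0,1]²`, whence `‖c⁻‖ ≤ (1 + 3|β⁺ - β⁻|/β⁻) ‖c⁺‖`; the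
jump conditions are symmetric in the two sides, which gives the other inequality.
-/

open RealInnerProductSpace Set

theorem norm_add_inner_smul_le {F : Type*} [SeminormedAddCommGroup F] [InnerProductSpace ℝ F]
    (r : ℝ) (x u w : F) : ‖x + (r * ⟪x, u⟫) • w‖ ≤ (1 + |r| * (‖u‖ * ‖w‖)) * ‖x‖ :=
  calc ‖x + (r * ⟪x, u⟫) • w‖ ≤ ‖x‖ + |r| * |⟪x, u⟫| * ‖w‖ := by
        rw [← abs_mul, ← Real.norm_eq_abs, ← norm_smul]
        exact norm_add_le _ _
    _ ≤ ‖x‖ + |r| * (‖x‖ * ‖u‖) * ‖w‖ := by gcongr; exact abs_real_inner_le_norm x u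
    _ = (1 + |r| * (‖u‖ * ‖w‖)) * ‖x‖ := by ring

theorem EuclideanSpace.norm_fin_four (a b c d : ℝ) :
    ‖!₂[a, b, c, d]‖ = √(a ^ 2 + b ^ 2 + c ^ 2 + d ^ 2) := by
  simp [EuclideanSpace.norm_eq, Fin.sum_univ_four]

theorem EuclideanSpace.inner_fin_four (a b c d x y z w : ℝ) :
    ⟪!₂[a, b, c, d], !₂[x, y, z, w]⟫ = a * x + b * y + c * z + d * w := by
  simp only [PiLp.inner_apply, RCLike.inner_apply, Real.ringHom_apply, Fin.sum_univ_four,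
    Fin.isValue, Matrix.cons_val_zero, Matrix.cons_val_one, Matrix.cons_val]
  ring

theorem sq_inner_le_of_unit {n₁ n₂ : ℝ} (hn : n₁ ^ 2 + n₂ ^ 2 = 1) (x y : ℝ) :
    (n₁ * x + n₂ * y) ^ 2 ≤ x ^ 2 + y ^ 2 := by
  nlinarith [sq_nonneg (n₁ * y - n₂ * x)]

theorem sq_add_sq_le_two {x y : ℝ} (hx : x ∈ Icc (0 : ℝ) 1) (hy : y ∈ Icc (0 : ℝ) 1) :
    x ^ 2 + y ^ 2 ≤ 2 := by
  nlinarith [hx.1, hx.2, hy.1, hy.2]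

theorem integral_affine_unitInterval (a b : ℝ) : ∫ t in (0 : ℝ)..1, (a + b * t) = a + b / 2 := by
  rw [intervalIntegral.integral_add intervalIntegrable_const
    (intervalIntegral.intervalIntegrable_id.const_mul b),
    intervalIntegral.integral_const_mul, integral_id, intervalIntegral.integral_const, smul_eq_mul]
  ring

theorem integral_flux_eq_midpoint (β c₂ c₃ c₄ : ℝ) (D E n : ℝ × ℝ) :
    ∫ t in (0 : ℝ)..1, β * ((c₂ + c₄ * (D.2 + t * (E.2 - D.2))) * n.1 +
        (c₃ + c₄ * (D.1 + t * (E.1 - D.1))) * n.2)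
      = β * ((c₂ + c₄ * ((D.2 + E.2) / 2)) * n.1 + (c₃ + c₄ * ((D.1 + E.1) / 2)) * n.2) := by
  have h_affine : ∀ t : ℝ, β * ((c₂ + c₄ * (D.2 + t * (E.2 - D.2))) * n.1 +
        (c₃ + c₄ * (D.1 + t * (E.1 - D.1))) * n.2)
      = β * ((c₂ + c₄ * D.2) * n.1 + (c₃ + c₄ * D.1) * n.2) +
        β * c₄ * ((E.2 - D.2) * n.1 + (E.1 - D.1) * n.2) * t :=
    fun t => by ring
  simp_rw [h_affine, integral_affine_unitInterval]
  ring

theorem bilJump_symm {βm βp c1m c2m c3m c1p c2p c3p c4 : ℝ} {D E n : ℝ × ℝ}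
    (hj : bilJump βm βp c1m c2m c3m c1p c2p c3p c4 D E n) :
    bilJump βp βm c1p c2p c3p c1m c2m c3m c4 D E n :=
  ⟨hj.1.symm, hj.2.1.symm, hj.2.2.symm⟩

theorem sub_ne_zero_or_of_ne {D E : ℝ × ℝ} (hDE : D ≠ E) : E.1 - D.1 ≠ 0 ∨ E.2 - D.2 ≠ 0 := by
  by_contra! h
  exact hDE (Prod.ext (sub_eq_zero.mp h.1).symm (sub_eq_zero.mp h.2).symm)

theorem gradient_eq_smul_normal_of_vanishes {a b c : ℝ} {D E n : ℝ × ℝ} (hDE : D ≠ E)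
    (hn : unitNormalTo n D E) (hD : a + b * D.1 + c * D.2 = 0) (hE : a + b * E.1 + c * E.2 = 0) :
    b = (b * n.1 + c * n.2) * n.1 ∧ c = (b * n.1 + c * n.2) * n.2 := by
  obtain ⟨hn_unit, hn_perp⟩ := hn
  have h_tangent : b * (E.1 - D.1) + c * (E.2 - D.2) = 0 := by linear_combination hE - hD
  have h_cross : b * n.2 - c * n.1 = 0 := by
    rcases sub_ne_zero_or_of_ne hDE with h | h
    · refine (mul_eq_zero.mp (?_ : (b * n.2 - c * n.1) * (E.1 - D.1) = 0)).resolve_right h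
      linear_combination n.2 * h_tangent - c * hn_perp
    · refine (mul_eq_zero.mp (?_ : (b * n.2 - c * n.1) * (E.2 - D.2) = 0)).resolve_right h
      linear_combination b * hn_perp - n.1 * h_tangent
  constructor
  · linear_combination -b * hn_unit + n.2 * h_cross
  · linear_combination -c * hn_unit - n.1 * h_cross

theorem bilJump_coeff_eq {βm βp c1m c2m c3m c1p c2p c3p c4 : ℝ} {D E n : ℝ × ℝ}
    (hβm : βm ≠ 0) (hDE : D ≠ E) (hn : unitNormalTo n D E)
    (hj : bilJump βm βp c1m c2m c3m c1p c2p c3p c4 D E n) :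
    !₂[c1m, c2m, c3m, c4] = !₂[c1p, c2p, c3p, c4] +
      ((βp - βm) / βm * ⟪!₂[c1p, c2p, c3p, c4],
          !₂[0, n.1, n.2, n.1 * ((D.2 + E.2) / 2) + n.2 * ((D.1 + E.1) / 2)]⟫) •
        !₂[-(n.1 * D.1 + n.2 * D.2), n.1, n.2, 0] := by
  obtain ⟨hjD, hjE, hflux⟩ := hj
  have h_len : √((E.1 - D.1) ^ 2 + (E.2 - D.2) ^ 2) ≠ 0 := by
    refine (Real.sqrt_pos.mpr ?_).ne'
    rcases sub_ne_zero_or_of_ne hDE with h | h <;> positivity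
  rw [integral_flux_eq_midpoint, integral_flux_eq_midpoint] at hflux
  replace hflux := mul_left_cancel₀ h_len hflux
  obtain ⟨hc2, hc3⟩ := gradient_eq_smul_normal_of_vanishes (a := c1m - c1p) (b := c2m - c2p)
    (c := c3m - c3p) hDE hn (by linear_combination hjD) (by linear_combination hjE)
  have hs : (c2m - c2p) * n.1 + (c3m - c3p) * n.2 = (βp - βm) / βm * ⟪!₂[c1p, c2p, c3p, c4],
      !₂[0, n.1, n.2, n.1 * ((D.2 + E.2) / 2) + n.2 * ((D.1 + E.1) / 2)]⟫ := by
    rw [EuclideanSpace.inner_fin_four, div_mul_eq_mul_div, eq_div_iff hβm]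
    linear_combination hflux
  rw [← hs]
  ext i
  fin_cases i <;>
    simp only [Fin.isValue, PiLp.add_apply, PiLp.smul_apply, smul_eq_mul, Matrix.cons_val,
      Matrix.cons_val_zero, Matrix.cons_val_one, Fin.zero_eta, Fin.mk_one, Fin.reduceFinMk]
  · linear_combination hjD - D.1 * hc2 - D.2 * hc3
  · linear_combination hc2
  · linear_combination hc3
  · ring

theorem coeff_norm_le_of_bilJump {βm βp c1m c2m c3m c1p c2p c3p c4 : ℝ} {D E n : ℝ × ℝ}
    (hβm : 0 < βm) (hDE : D ≠ E) (hn : unitNormalTo n D E)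
    (hD : D.1 ^ 2 + D.2 ^ 2 ≤ 2) (hE : E.1 ^ 2 + E.2 ^ 2 ≤ 2)
    (hj : bilJump βm βp c1m c2m c3m c1p c2p c3p c4 D E n) :
    √(c1m ^ 2 + c2m ^ 2 + c3m ^ 2 + c4 ^ 2)
      ≤ (1 + 3 * (|βp - βm| / βm)) * √(c1p ^ 2 + c2p ^ 2 + c3p ^ 2 + c4 ^ 2) := by
  have hu : ‖!₂[0, n.1, n.2, n.1 * ((D.2 + E.2) / 2) + n.2 * ((D.1 + E.1) / 2)]‖ ≤ √3 := by
    rw [EuclideanSpace.norm_fin_four]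
    gcongr
    nlinarith [hn.1, sq_inner_le_of_unit hn.1 ((D.2 + E.2) / 2) ((D.1 + E.1) / 2),
      sq_nonneg (D.1 - E.1), sq_nonneg (D.2 - E.2)]
  have hw : ‖!₂[-(n.1 * D.1 + n.2 * D.2), n.1, n.2, 0]‖ ≤ √3 := by
    rw [EuclideanSpace.norm_fin_four]
    gcongr
    nlinarith [hn.1, sq_inner_le_of_unit hn.1 D.1 D.2]
  have huw := (mul_le_mul hu hw (norm_nonneg _) (Real.sqrt_nonneg _)).trans_eq
    (Real.mul_self_sqrt zero_le_three)
  rw [← EuclideanSpace.norm_fin_four, ← EuclideanSpace.norm_fin_four,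
    bilJump_coeff_eq hβm.ne' hDE hn hj]
  refine (norm_add_inner_smul_le _ _ _ _).trans (mul_le_mul_of_nonneg_right ?_ (norm_nonneg _))
  rw [abs_div, abs_of_pos hβm]
  nlinarith [mul_le_mul_of_nonneg_left huw (by positivity : 0 ≤ |βp - βm| / βm)]

theorem interface_endpoints_bounds {h d e : ℝ} {D E : ℝ × ℝ} (hh0 : 0 < h) (hh1 : h < 1)
    (hd : d ∈ Icc (0 : ℝ) 1) (he : e ∈ Icc (0 : ℝ) 1)
    (hcfg : (D = ((0 : ℝ), d * h) ∧ E = (e * h, (0 : ℝ)) ∧ (d, e) ≠ (0, 0)) ∨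
      (D = (d * h, h) ∧ E = (e * h, (0 : ℝ)))) :
    D ≠ E ∧ D.1 ^ 2 + D.2 ^ 2 ≤ 2 ∧ E.1 ^ 2 + E.2 ^ 2 ≤ 2 := by
  have hh : h ∈ Icc (0 : ℝ) 1 := ⟨hh0.le, hh1.le⟩
  have hdh : d * h ∈ Icc (0 : ℝ) 1 := ⟨mul_nonneg hd.1 hh.1, mul_le_one₀ hd.2 hh.1 hh.2⟩
  have heh : e * h ∈ Icc (0 : ℝ) 1 := ⟨mul_nonneg he.1 hh.1, mul_le_one₀ he.2 hh.1 hh.2⟩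
  have h0 : (0 : ℝ) ∈ Icc (0 : ℝ) 1 := ⟨le_rfl, zero_le_one⟩
  rcases hcfg with ⟨rfl, rfl, hde⟩ | ⟨rfl, rfl⟩
  · refine ⟨fun hDE => hde ?_, sq_add_sq_le_two h0 hdh, sq_add_sq_le_two heh h0⟩
    obtain ⟨he0, hd0⟩ := Prod.mk.inj hDE
    rw [(mul_eq_zero.mp hd0).resolve_right hh0.ne', (mul_eq_zero.mp he0.symm).resolve_right hh0.ne']
  · exact ⟨fun hDE => hh0.ne' (Prod.mk.inj hDE).2, sq_add_sq_le_two hdh hh,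
      sq_add_sq_le_two heh h0⟩

/-- coefficient comparison for bilinear IFE functions on `K = [0,h]²` with an
interface configuration of Type I (`D = (0,dh)`, `E = (eh,0)`, `(d,e) ≠ (0,0)`) or Type II
(`D = (dh,h)`, `E = (eh,0)`): there is `C > 1` depending only on `β⁻, β⁺` with
`(1/C)‖(c₁⁺,c₂⁺,c₃⁺,c₄)‖ ≤ ‖(c₁⁻,c₂⁻,c₃⁻,c₄)‖ ≤ C‖(c₁⁺,c₂⁺,c₃⁺,c₄)‖`. -/
theorem stmt6 (βm βp : ℝ) (hβm : 0 < βm) (hβp : 0 < βp) :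
    ∃ C : ℝ, 1 < C ∧
      ∀ h d e c1m c2m c3m c1p c2p c3p c4 : ℝ, ∀ D E n : ℝ × ℝ,
        0 < h → h < 1 →
        d ∈ Set.Icc (0:ℝ) 1 → e ∈ Set.Icc (0:ℝ) 1 →
        unitNormalTo n D E →
        ((D = ((0:ℝ), d * h) ∧ E = (e * h, (0:ℝ)) ∧ (d, e) ≠ (0, 0)) ∨
         (D = (d * h, h) ∧ E = (e * h, (0:ℝ)))) →
        bilJump βm βp c1m c2m c3m c1p c2p c3p c4 D E n →
        (1 / C) * Real.sqrt (c1p ^ 2 + c2p ^ 2 + c3p ^ 2 + c4 ^ 2)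
            ≤ Real.sqrt (c1m ^ 2 + c2m ^ 2 + c3m ^ 2 + c4 ^ 2) ∧
        Real.sqrt (c1m ^ 2 + c2m ^ 2 + c3m ^ 2 + c4 ^ 2)
            ≤ C * Real.sqrt (c1p ^ 2 + c2p ^ 2 + c3p ^ 2 + c4 ^ 2) := by
  have hrm : 0 ≤ |βp - βm| / βm := by positivity
  have hrp : 0 ≤ |βm - βp| / βp := by positivity
  refine ⟨2 + 3 * (|βp - βm| / βm + |βm - βp| / βp), by linarith, ?_⟩
  intro h d e c1m c2m c3m c1p c2p c3p c4 D E n hh0 hh1 hd he hn hcfg hj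
  obtain ⟨hDE, hD, hE⟩ := interface_endpoints_bounds hh0 hh1 hd he hcfg
  have hmp := coeff_norm_le_of_bilJump hβm hDE hn hD hE hj
  have hpm := coeff_norm_le_of_bilJump hβp hDE hn hD hE (bilJump_symm hj)
  constructor
  · rw [one_div, inv_mul_le_iff₀ (by positivity)]
    exact hpm.trans (mul_le_mul_of_nonneg_right (by linarith) (Real.sqrt_nonneg _))
  · exact hmp.trans (mul_le_mul_of_nonneg_right (by linarith) (Real.sqrt_nonneg _))
end

section
/- Let h > 0 and K = [0,h] × [0,h]. If H ⊂ ℝ² is a closed half-plane whose intersection with K has Lebesgue area at least h²/2, then H contains at least one of the four closed congruent quarter squares K₁ = [0,h/2] × [0,h/2], K₂ = [h/2,h] × [0,h/2], K₃ = [0,h/2] × [h/2,h], K₄ = [h/2,h] × [h/2,h]. -/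
/-!
If the centre `p` of `K` lies in `H`, the quarter square at the corner of `K` where `X · u` is
smallest lies in `H`, since on it `X · u ≤ p · u`. Otherwise the point reflection through `p`
maps `H ∩ K` into `K` and off `H`, and the open slab between `H` and its reflection contains a
neighbourhood of `p`; so twice the area of `H ∩ K` falls short of the area of `K`.
-/

open MeasureTheory Set

section HalfSpace

variable {E : Type*} [NormedAddCommGroup E] [NormedSpace ℝ E] [MeasurableSpace E] [BorelSpace E]
  [FiniteDimensional ℝ E] (μ : Measure E) [μ.IsAddHaarMeasure]

theorem two_mul_measure_setOf_le_inter_lt (f : E →L[ℝ] ℝ) {K : Set E} (hKm : MeasurableSet K)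
    (hKfin : μ K ≠ ⊤) {p : E} (hsymm : ∀ x ∈ K, 2 • p - x ∈ K) (hp : p ∈ interior K) {c : ℝ}
    (hc : c < f p) : 2 * μ ({x | f x ≤ c} ∩ K) < μ K := by
  set A := {x | f x ≤ c} ∩ K
  set A' := (fun x => 2 • p - x) ⁻¹' A
  set S := {x | c < f x ∧ f x < 2 * f p - c} ∩ interior K
  have hAm : MeasurableSet A := measurableSet_le f.measurable measurable_const |>.inter hKm
  have hA' : μ A' = μ A :=
    (Measure.measurePreserving_sub_left μ (2 • p)).measure_preimage hAm.nullMeasurableSet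
  have hA'K : A' ⊆ K := fun x hx => by simpa using hsymm _ hx.2
  have hA'f {x : E} (hx : x ∈ A') : 2 * f p - c ≤ f x := by
    have : f (2 • p - x) ≤ c := hx.1
    simp only [map_sub, map_nsmul, nsmul_eq_mul, Nat.cast_ofNat] at this
    linarith
  have hSo : IsOpen S := ((isOpen_lt continuous_const f.continuous).inter
    (isOpen_lt f.continuous continuous_const)).inter isOpen_interior
  have hS_pos : 0 < μ S := hSo.measure_pos μ ⟨p, ⟨hc, by linarith⟩, hp⟩
  have hdisj₁ : Disjoint A A' := disjoint_left.2 fun x hx hx' => by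
    have : f x ≤ c := hx.1
    linarith [hA'f hx']
  have hdisj₂ : Disjoint (A ∪ A') S := disjoint_left.2 fun x hx hxS => by
    obtain ⟨⟨hcx, hxc⟩, -⟩ := hxS
    rcases hx with hx | hx
    · exact not_le_of_gt hcx hx.1
    · linarith [hA'f hx]
  have hsum : 2 * μ A + μ S ≤ μ K := calc
    2 * μ A + μ S = μ (A ∪ A' ∪ S) := by
      rw [measure_union hdisj₂ hSo.measurableSet,
        measure_union hdisj₁ ((continuous_const.sub continuous_id).measurable hAm), hA', two_mul]
    _ ≤ μ K := measure_mono <| union_subset (union_subset inter_subset_right hA'K)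
      (inter_subset_right.trans interior_subset)
  calc 2 * μ A < 2 * μ A + μ S :=
        ENNReal.lt_add_right (ne_top_of_le_ne_top hKfin (le_self_add.trans hsum)) hS_pos.ne'
    _ ≤ μ K := hsum

end HalfSpace

theorem volume_Icc_prod_Icc_self {h : ℝ} (h0 : 0 ≤ h) :
    volume (Icc (0 : ℝ) h ×ˢ Icc (0 : ℝ) h) = ENNReal.ofReal (h ^ 2) := by
  rw [Measure.volume_eq_prod, Measure.prod_prod, Real.volume_Icc, sub_zero,
    ← ENNReal.ofReal_mul h0, sq]

theorem two_mul_volume_setOf_le_inter_Icc_prod_Icc_lt {h a b c : ℝ} (h0 : 0 < h)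
    (hc : c < h / 2 * a + h / 2 * b) :
    2 * volume ({X : ℝ × ℝ | X.1 * a + X.2 * b ≤ c} ∩ Icc (0 : ℝ) h ×ˢ Icc (0 : ℝ) h) <
      volume (Icc (0 : ℝ) h ×ˢ Icc (0 : ℝ) h) := by
  have hlt := two_mul_measure_setOf_le_inter_lt volume
    ((ContinuousLinearMap.fst ℝ ℝ ℝ).smulRight a + (ContinuousLinearMap.snd ℝ ℝ ℝ).smulRight b)
    (measurableSet_Icc.prod measurableSet_Icc)
    (by rw [volume_Icc_prod_Icc_self h0.le]; exact ENNReal.ofReal_ne_top)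
    (p := (h / 2, h / 2)) ?symm ?center (c := c) (by simpa using hc)
  case symm =>
    rintro x ⟨⟨hx₁, hx₁'⟩, hx₂, hx₂'⟩
    simp only [Prod.smul_mk, Prod.fst_sub, Prod.snd_sub, nsmul_eq_mul, Nat.cast_ofNat, mem_prod,
      mem_Icc]
    constructor <;> constructor <;> linarith
  case center =>
    rw [interior_prod_eq, interior_Icc]
    exact ⟨⟨by linarith, by linarith⟩, by linarith, by linarith⟩
  simpa only [add_apply, ContinuousLinearMap.smulRight_apply, ContinuousLinearMap.coe_fst',
    ContinuousLinearMap.coe_snd', smul_eq_mul] using hlt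

theorem forall_mem_Icc_mul_le_or (a l m r : ℝ) :
    (∀ x ∈ Icc l m, x * a ≤ m * a) ∨ ∀ x ∈ Icc m r, x * a ≤ m * a := by
  rcases le_total 0 a with ha | ha
  · exact Or.inl fun x hx => mul_le_mul_of_nonneg_right hx.2 ha
  · exact Or.inr fun x hx => mul_le_mul_of_nonpos_right hx.1 ha

theorem prod_subset_setOf_add_le {I J : Set ℝ} {a b c m n : ℝ} (hI : ∀ x ∈ I, x * a ≤ m * a)
    (hJ : ∀ y ∈ J, y * b ≤ n * b) (hc : m * a + n * b ≤ c) :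
    I ×ˢ J ⊆ {X : ℝ × ℝ | X.1 * a + X.2 * b ≤ c} :=
  fun X hX => show X.1 * a + X.2 * b ≤ c by linarith [hI _ hX.1, hJ _ hX.2]

theorem stmt7_general (h : ℝ) (h0 : 0 < h) (u : ℝ × ℝ) (c : ℝ)
    (H : Set (ℝ × ℝ)) (hH : H = {X : ℝ × ℝ | X.1 * u.1 + X.2 * u.2 ≤ c})
    (harea : ENNReal.ofReal (h ^ 2 / 2)
      ≤ volume (H ∩ (Set.Icc (0:ℝ) h ×ˢ Set.Icc (0:ℝ) h))) :
    (Set.Icc (0:ℝ) (h / 2) ×ˢ Set.Icc (0:ℝ) (h / 2)) ⊆ H ∨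
    (Set.Icc (h / 2) h ×ˢ Set.Icc (0:ℝ) (h / 2)) ⊆ H ∨
    (Set.Icc (0:ℝ) (h / 2) ×ˢ Set.Icc (h / 2) h) ⊆ H ∨
    (Set.Icc (h / 2) h ×ˢ Set.Icc (h / 2) h) ⊆ H := by
  subst hH
  have hcenter : h / 2 * u.1 + h / 2 * u.2 ≤ c := by
    by_contra! hc
    refine (two_mul_volume_setOf_le_inter_Icc_prod_Icc_lt h0 hc).not_ge ?_
    calc volume (Icc (0 : ℝ) h ×ˢ Icc (0 : ℝ) h) = 2 * ENNReal.ofReal (h ^ 2 / 2) := by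
          rw [volume_Icc_prod_Icc_self h0.le, ← ENNReal.ofReal_ofNat 2,
            ← ENNReal.ofReal_mul zero_le_two]
          ring_nf
      _ ≤ _ := by gcongr
  rcases forall_mem_Icc_mul_le_or u.1 0 (h / 2) h with h₁ | h₁ <;>
    rcases forall_mem_Icc_mul_le_or u.2 0 (h / 2) h with h₂ | h₂
  · exact Or.inl (prod_subset_setOf_add_le h₁ h₂ hcenter)
  · exact Or.inr (Or.inr (Or.inl (prod_subset_setOf_add_le h₁ h₂ hcenter)))
  · exact Or.inr (Or.inl (prod_subset_setOf_add_le h₁ h₂ hcenter))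
  · exact Or.inr (Or.inr (Or.inr (prod_subset_setOf_add_le h₁ h₂ hcenter)))

/-- if a closed half-plane `H = {X : X·u ≤ c}` meets the square
`K = [0,h]²` in a set of area at least `h²/2`, then `H` contains one of the four closed
quarter squares of `K`. -/
theorem stmt7 (h : ℝ) (h0 : 0 < h) (u : ℝ × ℝ) (c : ℝ)
    (hu : u.1 ^ 2 + u.2 ^ 2 = 1)
    (H : Set (ℝ × ℝ)) (hH : H = {X : ℝ × ℝ | X.1 * u.1 + X.2 * u.2 ≤ c})
    (harea : ENNReal.ofReal (h ^ 2 / 2)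
      ≤ volume (H ∩ (Set.Icc (0:ℝ) h ×ˢ Set.Icc (0:ℝ) h))) :
    (Set.Icc (0:ℝ) (h / 2) ×ˢ Set.Icc (0:ℝ) (h / 2)) ⊆ H ∨
    (Set.Icc (h / 2) h ×ˢ Set.Icc (0:ℝ) (h / 2)) ⊆ H ∨
    (Set.Icc (0:ℝ) (h / 2) ×ˢ Set.Icc (h / 2) h) ⊆ H ∨
    (Set.Icc (h / 2) h ×ˢ Set.Icc (h / 2) h) ⊆ H :=
  stmt7_general h h0 u c H hH harea
end

section
/- There exist absolute constants C₁ > 0 and C₂ > 0 such that the following holds: for every h > 0, every β^s > 0, every closed half-plane H ⊂ ℝ² with area(H ∩ K) ≥ h²/2 where K = [0,h]², and every bilinear polynomial w(x,y) = c₁^s + c₂^s x + c₃^s y + c₄ xy, there exists a closed square K̃ ⊆ H ∩ K with area |K̃| ≥ C₁ |K| and (h/|K̃|) · β^s ∫_{K̃} |∇w|² dX ≥ C₂ β^s (h (c₂^s)² + h (c₃^s)² + h³ c₄²). -/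
/-!
Let `m = h * min u₁ 0 + h * min u₂ 0` be the minimum of `X ↦ X · u` on `K = [0,h]²`. The set
`H ∩ K` lies in the strip `[0,h] × {y ∈ [0,h] : y u₂ ≤ c - h * min u₁ 0}` of area
`h (c - m) / |u₂|`, so `|H ∩ K| ≥ h²/2` forces `c - m ≥ h |u₂| / 2`, and symmetrically
`c - m ≥ h |u₁| / 2`. Hence the square of side `h/4` in the corner of `K` where `X · u` is
smallest, on which `X · u ≤ m + h/4 (|u₁| + |u₂|)`, lies in `H`.

On a square of side `l` the integral of `|∇w|²` splits by Fubini into one-dimensional integrals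
`∫_s^{s+l} (p + q y)² = l (p + q (s + l/2))² + q² l³ / 12`, which dominate `l p² + l³ q²` up to
an absolute constant as long as the midpoint `s + l/2` is `O(l)`.
-/

open MeasureTheory Set

lemma le_mul_of_volume_le_prod {S : Set (ℝ × ℝ)} {s t : Set ℝ} {r a b : ℝ} (hr : 0 < r)
    (hS : S ⊆ s ×ˢ t) (hs : volume s ≤ ENNReal.ofReal a) (ht : volume t ≤ ENNReal.ofReal b)
    (hvol : ENNReal.ofReal r ≤ volume S) : r ≤ a * b := by
  have hprod : ENNReal.ofReal r ≤ ENNReal.ofReal a * ENNReal.ofReal b :=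
    calc ENNReal.ofReal r ≤ volume (s ×ˢ t) := hvol.trans (measure_mono hS)
      _ ≤ ENNReal.ofReal a * ENNReal.ofReal b := by
        rw [Measure.volume_eq_prod, Measure.prod_prod]; gcongr
  rcases le_total 0 a with ha | ha
  · rw [← ENNReal.ofReal_mul ha, ENNReal.ofReal_le_ofReal_iff'] at hprod
    exact hprod.resolve_right hr.not_ge
  · rw [ENNReal.ofReal_of_nonpos ha, zero_mul, nonpos_iff_eq_zero, ENNReal.ofReal_eq_zero]
      at hprod
    exact absurd hprod hr.not_ge

lemma mul_min_le_mul {h v x : ℝ} (hx : x ∈ Icc 0 h) : h * min v 0 ≤ x * v := by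
  rcases le_total v 0 with hv | hv
  · rw [min_eq_left hv]; nlinarith [hx.2]
  · rw [min_eq_right hv]; nlinarith [hx.1]

lemma volume_setOf_mul_le {h v t : ℝ} (hv : v ≠ 0) :
    volume {y ∈ Icc 0 h | y * v ≤ t} ≤ ENNReal.ofReal ((t - h * min v 0) / |v|) := by
  rcases hv.lt_or_gt with hv | hv
  · calc volume {y ∈ Icc 0 h | y * v ≤ t} ≤ volume (Icc (t / v) h) :=
          measure_mono fun y ⟨hy, hyt⟩ => ⟨(div_le_iff_of_neg hv).2 hyt, hy.2⟩
      _ = ENNReal.ofReal ((t - h * min v 0) / |v|) := by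
          rw [Real.volume_Icc, min_eq_left hv.le, abs_of_neg hv]
          congr 1
          field_simp
          ring
  · calc volume {y ∈ Icc 0 h | y * v ≤ t} ≤ volume (Icc 0 (t / v)) :=
          measure_mono fun y ⟨hy, hyt⟩ => ⟨hy.1, (le_div_iff₀ hv).2 hyt⟩
      _ = ENNReal.ofReal ((t - h * min v 0) / |v|) := by
          rw [Real.volume_Icc, min_eq_right hv.le, abs_of_pos hv, mul_zero, sub_zero, sub_zero]

lemma le_sub_min_of_volume_halfPlane_inter_square {h c u1 u2 : ℝ} (hh : 0 < h)
    (hu : u1 ≠ 0 ∨ u2 ≠ 0)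
    (hvol : ENNReal.ofReal (h ^ 2 / 2) ≤
      volume ({X : ℝ × ℝ | X.1 * u1 + X.2 * u2 ≤ c} ∩ (Icc 0 h ×ˢ Icc 0 h))) :
    h / 4 * (|u1| + |u2|) ≤ c - (h * min u1 0 + h * min u2 0) := by
  have hvolK : volume (Icc (0 : ℝ) h) ≤ ENNReal.ofReal h := by
    rw [Real.volume_Icc, sub_zero]
  have hslice : ∀ {v t : ℝ}, v ≠ 0 → h ^ 2 / 2 ≤ (t - h * min v 0) / |v| * h →
      h * |v| / 2 ≤ t - h * min v 0 := fun hv hle => by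
    rw [div_mul_eq_mul_div, le_div_iff₀ (abs_pos.2 hv)] at hle
    nlinarith
  have h1 : u1 ≠ 0 → h * |u1| / 2 ≤ c - (h * min u1 0 + h * min u2 0) := fun hu1 => by
    have hsub : {X : ℝ × ℝ | X.1 * u1 + X.2 * u2 ≤ c} ∩ (Icc 0 h ×ˢ Icc 0 h) ⊆
        {x ∈ Icc 0 h | x * u1 ≤ c - h * min u2 0} ×ˢ Icc 0 h := by
      rintro X ⟨hX, hx, hy⟩
      have hX' : X.1 * u1 + X.2 * u2 ≤ c := hX
      exact ⟨⟨hx, by linarith [mul_min_le_mul (v := u2) hy]⟩, hy⟩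
    have := hslice hu1
      (le_mul_of_volume_le_prod (by positivity) hsub (volume_setOf_mul_le hu1) hvolK hvol)
    linarith
  have h2 : u2 ≠ 0 → h * |u2| / 2 ≤ c - (h * min u1 0 + h * min u2 0) := fun hu2 => by
    have hsub : {X : ℝ × ℝ | X.1 * u1 + X.2 * u2 ≤ c} ∩ (Icc 0 h ×ˢ Icc 0 h) ⊆
        Icc 0 h ×ˢ {y ∈ Icc 0 h | y * u2 ≤ c - h * min u1 0} := by
      rintro X ⟨hX, hx, hy⟩
      have hX' : X.1 * u1 + X.2 * u2 ≤ c := hX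
      exact ⟨hx, hy, by linarith [mul_min_le_mul (v := u1) hx]⟩
    have := hslice hu2 (mul_comm h _ ▸
      le_mul_of_volume_le_prod (by positivity) hsub hvolK (volume_setOf_mul_le hu2) hvol)
    linarith
  rcases le_total |u1| |u2| with hle | hle
  · have hu2 : u2 ≠ 0 := fun h0 => by
      simp only [h0, abs_zero, abs_nonpos_iff] at hle; tauto
    nlinarith [h2 hu2]
  · have hu1 : u1 ≠ 0 := fun h0 => by
      simp only [h0, abs_zero, abs_nonpos_iff] at hle; tauto
    nlinarith [h1 hu1]

/-- `[cornerStart h l v, cornerStart h l v + l]` is the subinterval of `[0,h]` of length `l` on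
which `x ↦ x * v` is smallest. -/
noncomputable def cornerStart (h l v : ℝ) : ℝ := if 0 ≤ v then 0 else h - l

lemma cornerStart_nonneg {h l v : ℝ} (hlh : l ≤ h) : 0 ≤ cornerStart h l v := by
  unfold cornerStart; split_ifs <;> linarith

lemma cornerStart_add_le {h l v : ℝ} (hlh : l ≤ h) : cornerStart h l v + l ≤ h := by
  unfold cornerStart; split_ifs <;> linarith

lemma mul_le_of_mem_Icc_cornerStart {h l v x : ℝ}
    (hx : x ∈ Icc (cornerStart h l v) (cornerStart h l v + l)) :
    x * v ≤ h * min v 0 + l * |v| := by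
  unfold cornerStart at hx
  split_ifs at hx with hv
  · rw [min_eq_right hv, abs_of_nonneg hv]; nlinarith [hx.2]
  · rw [min_eq_left (not_le.1 hv).le, abs_of_neg (not_le.1 hv)]; nlinarith [hx.1]

lemma cornerSquare_subset_halfPlane_inter_square {h l c u1 u2 : ℝ} (hlh : l ≤ h)
    (hc : h * min u1 0 + h * min u2 0 + l * (|u1| + |u2|) ≤ c) :
    Icc (cornerStart h l u1) (cornerStart h l u1 + l) ×ˢ
        Icc (cornerStart h l u2) (cornerStart h l u2 + l) ⊆
      {X : ℝ × ℝ | X.1 * u1 + X.2 * u2 ≤ c} ∩ (Icc 0 h ×ˢ Icc 0 h) := by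
  rintro X ⟨hx, hy⟩
  refine ⟨?_, ⟨(cornerStart_nonneg hlh).trans hx.1, hx.2.trans (cornerStart_add_le hlh)⟩,
    ⟨(cornerStart_nonneg hlh).trans hy.1, hy.2.trans (cornerStart_add_le hlh)⟩⟩
  have := mul_le_of_mem_Icc_cornerStart hx
  have := mul_le_of_mem_Icc_cornerStart hy
  show X.1 * u1 + X.2 * u2 ≤ c
  linarith

lemma setIntegral_prod_add {s t : Set ℝ} {f g : ℝ → ℝ}
    (hs : volume s ≠ ⊤) (ht : volume t ≠ ⊤) (hf : IntegrableOn f t) (hg : IntegrableOn g s) :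
    ∫ X in s ×ˢ t, (f X.2 + g X.1) =
      (volume.real s * ∫ y in t, f y) + volume.real t * ∫ x in s, g x := by
  have : IsFiniteMeasure (volume.restrict s) := isFiniteMeasure_restrict.mpr hs
  have : IsFiniteMeasure (volume.restrict t) := isFiniteMeasure_restrict.mpr ht
  have hf1 := setIntegral_prod_mul (μ := volume) (ν := volume) (fun _ => (1:ℝ)) f s t
  have hg1 := setIntegral_prod_mul (μ := volume) (ν := volume) g (fun _ => (1:ℝ)) s t
  simp only [one_mul, mul_one, setIntegral_const, smul_eq_mul] at hf1 hg1
  rw [Measure.volume_eq_prod, integral_add, hf1, hg1, mul_comm (∫ x in s, g x)]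
  all_goals rw [← Measure.prod_restrict]
  exacts [hf.comp_snd _, hg.comp_fst _]

lemma integral_sq_affine (p q s l : ℝ) :
    ∫ y in s..s + l, (p + q * y) ^ 2 = l * (p + q * (s + l / 2)) ^ 2 + q ^ 2 * l ^ 3 / 12 := by
  have hp (y : ℝ) : (p + q * y) ^ 2 = p ^ 2 + (2 * p * q) * y + q ^ 2 * y ^ 2 := by ring
  simp only [hp]
  rw [intervalIntegral.integral_add, intervalIntegral.integral_add,
    intervalIntegral.integral_const_mul, intervalIntegral.integral_const_mul, integral_id,
    integral_pow, intervalIntegral.integral_const, smul_eq_mul]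
  · ring
  all_goals apply Continuous.intervalIntegrable; fun_prop

lemma le_integral_sq_affine {p q s l : ℝ} (hl : 0 ≤ l) (hs : 0 ≤ s) (hsl : s ≤ 3 * l) :
    l * p ^ 2 + l ^ 3 * q ^ 2 ≤ 306 * ∫ y in Icc s (s + l), (p + q * y) ^ 2 := by
  rw [integral_Icc_eq_integral_Ioc, ← intervalIntegral.integral_of_le (by linarith),
    integral_sq_affine]
  -- `p = (p + q m) - q m` with `m = s + l/2 ∈ [0, 7l/2]`
  have hp : p ^ 2 ≤ 2 * (p + q * (s + l / 2)) ^ 2 + 2 * q ^ 2 * (s + l / 2) ^ 2 := by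
    nlinarith [sq_nonneg (p + 2 * q * (s + l / 2))]
  have hm : (s + l / 2) ^ 2 ≤ (7 / 2 * l) ^ 2 :=
    pow_le_pow_left₀ (by linarith) (by linarith) 2
  nlinarith [mul_le_mul_of_nonneg_left hp hl,
    mul_le_mul_of_nonneg_left hm (mul_nonneg hl (sq_nonneg q))]

lemma le_integral_sq_grad_square {a b l p q r : ℝ} (hl : 0 ≤ l) (ha : 0 ≤ a) (ha3 : a ≤ 3 * l)
    (hb : 0 ≤ b) (hb3 : b ≤ 3 * l) :
    l ^ 2 * (p ^ 2 + r ^ 2 + 2 * l ^ 2 * q ^ 2) ≤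
      306 * ∫ X in Icc a (a + l) ×ˢ Icc b (b + l), ((p + q * X.2) ^ 2 + (r + q * X.1) ^ 2) := by
  have hsplit := setIntegral_prod_add (s := Icc a (a + l)) (t := Icc b (b + l))
    (f := fun y => (p + q * y) ^ 2) (g := fun x => (r + q * x) ^ 2)
    measure_Icc_lt_top.ne measure_Icc_lt_top.ne
    (Continuous.integrableOn_Icc (by fun_prop)) (Continuous.integrableOn_Icc (by fun_prop))
  simp only [Real.volume_real_Icc, add_sub_cancel_left, max_eq_left hl] at hsplit
  rw [hsplit]
  nlinarith [le_integral_sq_affine (p := p) (q := q) hl hb hb3,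
    le_integral_sq_affine (p := r) (q := q) hl ha ha3]

/-- there are absolute constants `C₁, C₂ > 0` such that for every `h > 0`,
every `βˢ > 0`, every closed half-plane `H` with `area(H ∩ K) ≥ h²/2` (`K = [0,h]²`), and
every bilinear polynomial `w = c₁ˢ + c₂ˢx + c₃ˢy + c₄xy` (with `∇w = (c₂ˢ + c₄y, c₃ˢ + c₄x)`),
there is a closed square `K̃ ⊆ H ∩ K` with `|K̃| ≥ C₁|K|` and
`(h/|K̃|) βˢ ∫_{K̃} |∇w|² ≥ C₂ βˢ (h(c₂ˢ)² + h(c₃ˢ)² + h³c₄²)`. -/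
theorem stmt9 :
    ∃ C1 C2 : ℝ, 0 < C1 ∧ 0 < C2 ∧
      ∀ h : ℝ, 0 < h → ∀ βs : ℝ, 0 < βs →
        ∀ u : ℝ × ℝ, ∀ c : ℝ, u.1 ^ 2 + u.2 ^ 2 = 1 →
          ∀ H : Set (ℝ × ℝ), H = {X : ℝ × ℝ | X.1 * u.1 + X.2 * u.2 ≤ c} →
            ENNReal.ofReal (h ^ 2 / 2)
                ≤ volume (H ∩ (Set.Icc (0:ℝ) h ×ˢ Set.Icc (0:ℝ) h)) →
            ∀ c1s c2s c3s c4 : ℝ,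
              ∃ a b l : ℝ, 0 < l ∧
                (Set.Icc a (a + l) ×ˢ Set.Icc b (b + l))
                    ⊆ H ∩ (Set.Icc (0:ℝ) h ×ˢ Set.Icc (0:ℝ) h) ∧
                C1 * h ^ 2 ≤ l ^ 2 ∧
                C2 * βs * (h * c2s ^ 2 + h * c3s ^ 2 + h ^ 3 * c4 ^ 2)
                  ≤ (h / l ^ 2) * (βs *
                      ∫ X in (Set.Icc a (a + l) ×ˢ Set.Icc b (b + l)),
                        ((c2s + c4 * X.2) ^ 2 + (c3s + c4 * X.1) ^ 2)) := by
  refine ⟨1 / 16, 1 / 2448, by norm_num, by norm_num, ?_⟩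
  rintro h hh βs hβs ⟨u1, u2⟩ c hu H rfl hvol - c2s c3s c4
  have hu0 : u1 ≠ 0 ∨ u2 ≠ 0 := by
    by_contra! h0
    simp [h0.1, h0.2] at hu
  have hc := le_sub_min_of_volume_halfPlane_inter_square hh hu0 hvol
  have hlh : h / 4 ≤ h := by linarith
  set a := cornerStart h (h / 4) u1
  set b := cornerStart h (h / 4) u2
  refine ⟨a, b, h / 4, by positivity,
    cornerSquare_subset_halfPlane_inter_square hlh (by linarith), by nlinarith, ?_⟩
  have hJ := le_integral_sq_grad_square (p := c2s) (q := c4) (r := c3s)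
    (by positivity : 0 ≤ h / 4)
    (cornerStart_nonneg (v := u1) hlh) (by linarith [cornerStart_add_le (v := u1) hlh])
    (cornerStart_nonneg (v := u2) hlh) (by linarith [cornerStart_add_le (v := u2) hlh])
  set J := ∫ X in Icc a (a + h / 4) ×ˢ Icc b (b + h / 4),
    ((c2s + c4 * X.2) ^ 2 + (c3s + c4 * X.1) ^ 2)
  calc 1 / 2448 * βs * (h * c2s ^ 2 + h * c3s ^ 2 + h ^ 3 * c4 ^ 2)
      ≤ βs * (16 / h) *
          ((h / 4) ^ 2 * (c2s ^ 2 + c3s ^ 2 + 2 * (h / 4) ^ 2 * c4 ^ 2) / 306) := by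
        field_simp
        nlinarith [mul_nonneg hh.le (sq_nonneg c2s), mul_nonneg hh.le (sq_nonneg c3s)]
    _ ≤ βs * (16 / h) * J := by gcongr; linarith
    _ = h / (h / 4) ^ 2 * (βs * J) := by field_simp; ring
end

section
/- There exists an absolute constant C > 0 such that for every h > 0, every d with 0 ≤ d < h, and every Lebesgue-measurable function g : [0,h] → ℝ, the iterated integral bound ∫₀^d ∫₀^{(d−y)/(h−y)} (1−t)² (h−y)² g(y + t(h−y))² dt dy ≤ C h² ∫₀^d g(z)² dz holds (with both sides possibly infinite). -/
open MeasureTheory ENNReal Set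

/-! For fixed `y`, the substitution `z = y + t (h - y)` has Jacobian `h - y` and, since
`(1 - t)² ≤ 1`, bounds the inner integral by `(h - y) ∫_y^d g² ≤ h ∫_0^d g²`. Integrating over
`y ∈ [0, d]` gives `d h ∫_0^d g² ≤ h² ∫_0^d g²`, so `C = 1` works. -/

lemma setLIntegral_sq_comp_affine_le {g : ℝ → ℝ} {y d h : ℝ} (hyd : y ≤ d) (hdh : d < h) :
    ∫⁻ t in Icc (0:ℝ) ((d - y) / (h - y)),
        ENNReal.ofReal ((1 - t) ^ 2 * (h - y) ^ 2 * g (y + t * (h - y)) ^ 2)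
      ≤ ENNReal.ofReal (h - y) * ∫⁻ z in Icc y d, ENNReal.ofReal (g z ^ 2) := by
  set c := h - y
  have hc : 0 < c := by linarith
  have hT : c * ((d - y) / c) + y = d := by field_simp; ring
  have hT1 : (d - y) / c ≤ 1 := (div_le_one hc).2 (by linarith)
  have himage : (c * · + y) '' Icc 0 ((d - y) / c) = Icc y d := by
    rw [image_affine_Icc' hc, hT, mul_zero, zero_add]
  calc ∫⁻ t in Icc 0 ((d - y) / c), ENNReal.ofReal ((1 - t) ^ 2 * c ^ 2 * g (y + t * c) ^ 2)
      ≤ ∫⁻ t in Icc 0 ((d - y) / c),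
          ENNReal.ofReal c * (ENNReal.ofReal |c| * ENNReal.ofReal (g (c * t + y) ^ 2)) := by
        refine setLIntegral_mono' measurableSet_Icc fun t ⟨ht0, ht1⟩ => ?_
        rw [abs_of_pos hc, ← ENNReal.ofReal_mul hc.le, ← ENNReal.ofReal_mul (by positivity),
          add_comm y, mul_comm t]
        refine ENNReal.ofReal_le_ofReal ?_
        have : (1 - t) ^ 2 ≤ 1 := by nlinarith
        nlinarith [mul_le_mul_of_nonneg_right this (sq_nonneg (c * g (c * t + y)))]
    _ = ENNReal.ofReal c * ∫⁻ z in Icc y d, ENNReal.ofReal (g z ^ 2) := by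
        rw [lintegral_const_mul' _ _ ofReal_ne_top, ← himage,
          lintegral_image_eq_lintegral_abs_deriv_mul measurableSet_Icc
            (fun t _ => ((hasDerivAt_id' t).const_mul c |>.add_const y).hasDerivWithinAt)
            ((add_left_injective y).comp (mul_right_injective₀ hc.ne')).injOn]
        simp

/-- there is an absolute constant `C > 0` such that for every `h > 0`,
`0 ≤ d < h`, and every Lebesgue-measurable `g : [0,h] → ℝ`,
`∫₀^d ∫₀^{(d-y)/(h-y)} (1-t)²(h-y)² g(y+t(h-y))² dt dy ≤ C h² ∫₀^d g(z)² dz`. -/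
theorem stmt12 :
    ∃ C : ℝ, 0 < C ∧
      ∀ h d : ℝ, 0 < h → 0 ≤ d → d < h →
        ∀ g : ℝ → ℝ, Measurable g →
          (∫⁻ y in Set.Icc (0:ℝ) d, ∫⁻ t in Set.Icc (0:ℝ) ((d - y) / (h - y)),
              ENNReal.ofReal ((1 - t) ^ 2 * (h - y) ^ 2 * (g (y + t * (h - y))) ^ 2))
            ≤ ENNReal.ofReal (C * h ^ 2) *
                ∫⁻ z in Set.Icc (0:ℝ) d, ENNReal.ofReal ((g z) ^ 2) := by
  refine ⟨1, one_pos, fun h d hh hd hdh g _ => ?_⟩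
  set I := ∫⁻ z in Icc (0:ℝ) d, ENNReal.ofReal (g z ^ 2)
  have inner_le (y : ℝ) (hy : y ∈ Icc 0 d) :
      ∫⁻ t in Icc (0:ℝ) ((d - y) / (h - y)),
          ENNReal.ofReal ((1 - t) ^ 2 * (h - y) ^ 2 * g (y + t * (h - y)) ^ 2)
        ≤ ENNReal.ofReal h * I :=
    (setLIntegral_sq_comp_affine_le hy.2 hdh).trans <| by
      gcongr
      · linarith [hy.1]
      · exact lintegral_mono_set (Icc_subset_Icc_left hy.1)
  calc _ ≤ ∫⁻ _ in Icc (0:ℝ) d, ENNReal.ofReal h * I := setLIntegral_mono measurable_const inner_le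
    _ = ENNReal.ofReal (d * h) * I := by
        rw [setLIntegral_const, Real.volume_Icc, sub_zero, ENNReal.ofReal_mul hd]
        ring
    _ ≤ ENNReal.ofReal (1 * h ^ 2) * I := by
        gcongr ENNReal.ofReal ?_ * I
        nlinarith
end

section
/- There exists an absolute constant C > 0 such that for every h > 0, every d with 0 ≤ d < h, and every Lebesgue-measurable function g : [0,h] → ℝ, the iterated integral bound ∫₀^d ∫_{(d−y)/(h−y)}^{1} (1−t)² (h−y)² g(y + t(h−y))² dt dy ≤ C h² ∫_d^h g(z)² dz holds (with both sides possibly infinite). -/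
/-! Dropping the factor `(1 - t)² ≤ 1`, the substitution `z = y + t(h - y)` bounds the inner
integral by `(h - y) ∫_d^h g² ≤ h ∫_d^h g²`; integrating over `y ∈ [0, d]` gives the claim with
`C = 1`. -/

open MeasureTheory Set
open scoped ENNReal

theorem lintegral_Icc_comp_add_mul (F : ℝ → ℝ≥0∞) {b : ℝ} (hb : 0 < b) (c a a' : ℝ) :
    ∫⁻ t in Icc a a', ENNReal.ofReal b * F (c + t * b) =
      ∫⁻ z in Icc (c + a * b) (c + a' * b), F z := by
  have himage : (fun t => c + t * b) '' Icc a a' = Icc (c + a * b) (c + a' * b) := by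
    simpa only [mul_comm b, add_comm c] using image_affine_Icc' hb c a a'
  have hderiv (t : ℝ) : HasDerivWithinAt (fun t => c + t * b) b (Icc a a') t := by
    simpa using ((hasDerivAt_id t).mul_const b).const_add c |>.hasDerivWithinAt
  have hinj : InjOn (fun t => c + t * b) (Icc a a') := fun s _ t _ hst => by
    simpa [hb.ne'] using hst
  rw [← himage, lintegral_image_eq_lintegral_abs_deriv_mul measurableSet_Icc
    (fun t _ => hderiv t) hinj, abs_of_pos hb]

theorem lintegral_weighted_tail_le {h d y : ℝ} (hyd : y ≤ d) (hdh : d < h) (g : ℝ → ℝ) :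
    ∫⁻ t in Icc ((d - y) / (h - y)) 1,
        ENNReal.ofReal ((1 - t) ^ 2 * (h - y) ^ 2 * g (y + t * (h - y)) ^ 2)
      ≤ ENNReal.ofReal (h - y) * ∫⁻ z in Icc d h, ENNReal.ofReal (g z ^ 2) := by
  have hb : 0 < h - y := by linarith
  have ht0 : 0 ≤ (d - y) / (h - y) := div_nonneg (by linarith) hb.le
  have hlower : y + (d - y) / (h - y) * (h - y) = d := by field_simp; ring
  have hupper : y + 1 * (h - y) = h := by ring
  calc ∫⁻ t in Icc ((d - y) / (h - y)) 1,
        ENNReal.ofReal ((1 - t) ^ 2 * (h - y) ^ 2 * g (y + t * (h - y)) ^ 2)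
      ≤ ∫⁻ t in Icc ((d - y) / (h - y)) 1, ENNReal.ofReal (h - y) *
          (ENNReal.ofReal (h - y) * ENNReal.ofReal (g (y + t * (h - y)) ^ 2)) := by
        refine setLIntegral_mono' measurableSet_Icc fun t ⟨ht, ht1⟩ => ?_
        rw [← ENNReal.ofReal_mul hb.le, ← ENNReal.ofReal_mul hb.le]
        refine ENNReal.ofReal_le_ofReal ?_
        have hsq : (1 - t) ^ 2 ≤ 1 := by nlinarith
        nlinarith [mul_nonneg (sq_nonneg (h - y)) (sq_nonneg (g (y + t * (h - y))))]
    _ = ENNReal.ofReal (h - y) * ∫⁻ z in Icc d h, ENNReal.ofReal (g z ^ 2) := by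
        rw [lintegral_const_mul' _ _ ENNReal.ofReal_ne_top,
          lintegral_Icc_comp_add_mul (fun z => ENNReal.ofReal (g z ^ 2)) hb, hlower, hupper]

/-- there is an absolute constant `C > 0` such that for every `h > 0`,
`0 ≤ d < h`, and every Lebesgue-measurable `g : [0,h] → ℝ`,
`∫₀^d ∫_{(d-y)/(h-y)}^1 (1-t)²(h-y)² g(y+t(h-y))² dt dy ≤ C h² ∫_d^h g(z)² dz`. -/
theorem stmt13 :
    ∃ C : ℝ, 0 < C ∧
      ∀ h d : ℝ, 0 < h → 0 ≤ d → d < h →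
        ∀ g : ℝ → ℝ, Measurable g →
          (∫⁻ y in Set.Icc (0:ℝ) d, ∫⁻ t in Set.Icc ((d - y) / (h - y)) 1,
              ENNReal.ofReal ((1 - t) ^ 2 * (h - y) ^ 2 * (g (y + t * (h - y))) ^ 2))
            ≤ ENNReal.ofReal (C * h ^ 2) *
                ∫⁻ z in Set.Icc d h, ENNReal.ofReal ((g z) ^ 2) := by
  refine ⟨1, one_pos, fun h d hh hd hdh g _ => ?_⟩
  set J := ∫⁻ z in Icc d h, ENNReal.ofReal (g z ^ 2)
  calc ∫⁻ y in Icc (0:ℝ) d, ∫⁻ t in Icc ((d - y) / (h - y)) 1,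
          ENNReal.ofReal ((1 - t) ^ 2 * (h - y) ^ 2 * g (y + t * (h - y)) ^ 2)
      ≤ ∫⁻ _ in Icc (0:ℝ) d, ENNReal.ofReal h * J :=
        setLIntegral_mono' measurableSet_Icc fun y ⟨hy0, hyd⟩ =>
          (lintegral_weighted_tail_le hyd hdh g).trans
            (mul_le_mul_left (ENNReal.ofReal_le_ofReal (by linarith)) J)
    _ = ENNReal.ofReal (d * h) * J := by
        rw [setLIntegral_const, Real.volume_Icc, sub_zero, ENNReal.ofReal_mul hd, mul_comm,
          mul_assoc]
    _ ≤ ENNReal.ofReal (1 * h ^ 2) * J := by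
        exact mul_le_mul_left (ENNReal.ofReal_le_ofReal (by nlinarith)) J
end
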